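/- arXiv:1909.02353 — 10 statements merged into one kernel-verified Lean document; each statement's English description precedes it below -/
import Mathlib

section
/- Let (f,M) be a polymatroid, let F1,F2 be flats of (f,M), let 𝓜=𝓜(F1,F2) be the modular cut generated by F1 and F2, and set S=F1∩F2. Assume S∉𝓜 (so 𝓜 is non-principal) and that δ(F1,F2)=δ(𝓜). Then for every F∈𝓜: (a) S⊆F, and (b) f(F)−f(S)>δ(𝓜). -/
open scoped Classical

/-- A polymatroid on the finite ground set `M`: `f` is zero on the empty set,
nonnegative, monotone and submodular on subsets of `M`. -/
def IsPolymatroid {α : Type*} [DecidableEq α] (M : Finset α) (f : Finset α → ℝ) : Prop :=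
  f ∅ = 0 ∧
  (∀ A, A ⊆ M → 0 ≤ f A) ∧
  (∀ A B, A ⊆ B → B ⊆ M → f A ≤ f B) ∧
  (∀ A B, A ⊆ M → B ⊆ M → f (A ∪ B) + f (A ∩ B) ≤ f A + f B)

/-- `F` is a flat of the polymatroid `(f, M)`: every proper superset inside `M`
has strictly larger rank. -/
def IsFlat {α : Type*} [DecidableEq α] (M : Finset α) (f : Finset α → ℝ) (F : Finset α) : Prop :=
  F ⊆ M ∧ ∀ G, F ⊂ G → G ⊆ M → f F < f G

/-- The modular defect of a pair of subsets. -/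
def modularDefect {α : Type*} [DecidableEq α] (f : Finset α → ℝ) (A B : Finset α) : ℝ :=
  f A + f B - f (A ∩ B) - f (A ∪ B)

/-- A modular cut: a collection of flats, closed upwards among flats,
and closed under intersections of modular pairs. -/
def IsModularCut {α : Type*} [DecidableEq α] (M : Finset α) (f : Finset α → ℝ)
    (𝓜 : Set (Finset α)) : Prop :=
  (∀ F ∈ 𝓜, IsFlat M f F) ∧
  (∀ F₁ ∈ 𝓜, ∀ F₂, IsFlat M f F₂ → F₁ ⊆ F₂ → F₂ ∈ 𝓜) ∧
  (∀ F₁ ∈ 𝓜, ∀ F₂ ∈ 𝓜, modularDefect f F₁ F₂ = 0 → F₁ ∩ F₂ ∈ 𝓜)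

/-- A modular cut is principal if it is empty or the intersection of all of its
elements (taken inside the ground set `M`) is one of its elements. -/
def IsPrincipal {α : Type*} [DecidableEq α] (M : Finset α) (𝓜 : Set (Finset α)) : Prop :=
  𝓜 = ∅ ∨ (M.filter fun x => ∀ F ∈ 𝓜, x ∈ F) ∈ 𝓜

/-- `(g, N)` is an extension of the polymatroid `(f, M)`. -/
def IsExtension {α : Type*} [DecidableEq α] (M : Finset α) (f : Finset α → ℝ)
    (N : Finset α) (g : Finset α → ℝ) : Prop :=
  M ⊆ N ∧ IsPolymatroid N g ∧ ∀ A, A ⊆ M → g A = f A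

/-- `h` is an amalgam of the two extensions `(g₁, N₁)` and `(g₂, N₂)`. -/
def IsAmalgam {α : Type*} [DecidableEq α] (N₁ : Finset α) (g₁ : Finset α → ℝ)
    (N₂ : Finset α) (g₂ : Finset α → ℝ) (h : Finset α → ℝ) : Prop :=
  IsPolymatroid (N₁ ∪ N₂) h ∧ (∀ A, A ⊆ N₁ → h A = g₁ A) ∧ (∀ A, A ⊆ N₂ → h A = g₂ A)

/-- A polymatroid is sticky if every two extensions intersecting exactly
in the ground set have an amalgam. -/
def Sticky {α : Type*} [DecidableEq α] (M : Finset α) (f : Finset α → ℝ) : Prop :=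
  ∀ N₁ g₁ N₂ g₂, IsExtension M f N₁ g₁ → IsExtension M f N₂ g₂ → N₁ ∩ N₂ = M →
    ∃ h, IsAmalgam N₁ g₁ N₂ g₂ h

/-!
The members of `𝓜` containing `S = F₁ ∩ F₂` form a modular cut containing `F₁` and `F₂`, hence
all of `𝓜`; this is (a). For (b), suppose `F ∈ 𝓜` has `f F - f S ≤ δ(𝓜)`. For any `G ∈ 𝓜` with
`F ∩ G ∉ 𝓜`, minimality of the defect and `f S ≤ f (F ∩ G)` force `f (F ∪ G) ≤ f G`, so `F ⊆ G`
because `G` is a flat, i.e. `F ∩ G = F ∈ 𝓜` after all. Applying this with `G = F₁` and then, to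
`F ∩ F₁`, with `G = F₂` puts `F ∩ F₁ ∩ F₂ = S` into `𝓜`, a contradiction.
-/

section

variable {α : Type*} [DecidableEq α] {M : Finset α} {f : Finset α → ℝ}

theorem IsPolymatroid.mono (hf : IsPolymatroid M f) {A B : Finset α} (hAB : A ⊆ B)
    (hB : B ⊆ M) : f A ≤ f B :=
  hf.2.2.1 A B hAB hB

theorem IsFlat.subset_of_sub_le_modularDefect {F G : Finset α} (hG : IsFlat M f G)
    (hF : F ⊆ M) (h : f F - f (F ∩ G) ≤ modularDefect f F G) : F ⊆ G := by
  by_contra hFG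
  have hlt : G ⊂ F ∪ G :=
    Finset.ssubset_iff_subset_ne.mpr ⟨Finset.subset_union_right,
      fun hG_eq => hFG (hG_eq ▸ Finset.subset_union_left)⟩
  have := hG.2 _ hlt (Finset.union_subset hF hG.1)
  unfold modularDefect at h
  linarith

namespace IsModularCut

variable {𝓜 : Set (Finset α)}

theorem sep_superset (h𝓜 : IsModularCut M f 𝓜) (S : Finset α) :
    IsModularCut M f {F ∈ 𝓜 | S ⊆ F} :=
  ⟨fun F hF => h𝓜.1 F hF.1,
    fun _ hG₁ G₂ hG₂ hss => ⟨h𝓜.2.1 _ hG₁.1 G₂ hG₂ hss, hG₁.2.trans hss⟩,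
    fun _ hG₁ _ hG₂ hd => ⟨h𝓜.2.2 _ hG₁.1 _ hG₂.1 hd, Finset.subset_inter hG₁.2 hG₂.2⟩⟩

theorem inter_subset_of_generated (h𝓜 : IsModularCut M f 𝓜) {F₁ F₂ : Finset α}
    (hF₁ : F₁ ∈ 𝓜) (hF₂ : F₂ ∈ 𝓜)
    (hgen : ∀ 𝓝 : Set (Finset α), IsModularCut M f 𝓝 → F₁ ∈ 𝓝 → F₂ ∈ 𝓝 → 𝓜 ⊆ 𝓝) :
    ∀ F ∈ 𝓜, F₁ ∩ F₂ ⊆ F := fun _ hF =>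
  (hgen _ (h𝓜.sep_superset (F₁ ∩ F₂)) ⟨hF₁, Finset.inter_subset_left⟩
    ⟨hF₂, Finset.inter_subset_right⟩ hF).2

theorem inter_mem_of_sub_le (h𝓜 : IsModularCut M f 𝓜) (hf : IsPolymatroid M f)
    {S : Finset α} (hS : ∀ F ∈ 𝓜, S ⊆ F) {δ : ℝ}
    (hmin : ∀ G₁ ∈ 𝓜, ∀ G₂ ∈ 𝓜, G₁ ∩ G₂ ∉ 𝓜 → δ ≤ modularDefect f G₁ G₂)
    {F G : Finset α} (hF : F ∈ 𝓜) (hFS : f F - f S ≤ δ) (hG : G ∈ 𝓜) : F ∩ G ∈ 𝓜 := by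
  by_contra hFG
  have hFM : F ⊆ M := (h𝓜.1 F hF).1
  have hS_le : f S ≤ f (F ∩ G) :=
    hf.mono (Finset.subset_inter (hS F hF) (hS G hG)) (Finset.inter_subset_left.trans hFM)
  have hFG_sub : F ⊆ G := (h𝓜.1 G hG).subset_of_sub_le_modularDefect hFM
    (by linarith [hmin F hF G hG hFG])
  exact hFG (by rwa [Finset.inter_eq_left.mpr hFG_sub])

end IsModularCut

end

theorem statement_1_general {α : Type*} [DecidableEq α]
    (M : Finset α) (f : Finset α → ℝ) (hf : IsPolymatroid M f)
    (F₁ F₂ : Finset α)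
    (𝓜 : Set (Finset α)) (h𝓜 : IsModularCut M f 𝓜)
    (hF₁mem : F₁ ∈ 𝓜) (hF₂mem : F₂ ∈ 𝓜)
    (hgen : ∀ 𝓝 : Set (Finset α), IsModularCut M f 𝓝 → F₁ ∈ 𝓝 → F₂ ∈ 𝓝 → 𝓜 ⊆ 𝓝)
    (hS : F₁ ∩ F₂ ∉ 𝓜)
    (hmin : ∀ G₁ ∈ 𝓜, ∀ G₂ ∈ 𝓜, G₁ ∩ G₂ ∉ 𝓜 →
      modularDefect f F₁ F₂ ≤ modularDefect f G₁ G₂) :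
    ∀ F ∈ 𝓜, F₁ ∩ F₂ ⊆ F ∧ modularDefect f F₁ F₂ < f F - f (F₁ ∩ F₂) := by
  have hsub := h𝓜.inter_subset_of_generated hF₁mem hF₂mem hgen
  intro F hF
  refine ⟨hsub F hF, ?_⟩
  by_contra! hle
  have hF₁' : F ∩ F₁ ∈ 𝓜 := h𝓜.inter_mem_of_sub_le hf hsub hmin hF hle hF₁mem
  have hle' : f (F ∩ F₁) ≤ f F := hf.mono Finset.inter_subset_left (h𝓜.1 F hF).1
  have hS' : F ∩ F₁ ∩ F₂ ∈ 𝓜 :=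
    h𝓜.inter_mem_of_sub_le hf hsub hmin hF₁' (by linarith) hF₂mem
  rw [Finset.inter_assoc, Finset.inter_eq_right.mpr (hsub F hF)] at hS'
  exact hS hS'

/-- If the modular cut `𝓜` is generated by the flats `F₁, F₂`,
`S = F₁ ∩ F₂ ∉ 𝓜`, and `δ(F₁,F₂) = δ(𝓜)` (i.e. `δ(F₁,F₂)` is minimal among the
modular defects of pairs of members of `𝓜` whose intersection is not in `𝓜`),
then every `F ∈ 𝓜` satisfies `S ⊆ F` and `f F - f S > δ(𝓜)`. -/
theorem statement_1 {α : Type*} [DecidableEq α]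
    (M : Finset α) (f : Finset α → ℝ) (hf : IsPolymatroid M f)
    (F₁ F₂ : Finset α) (hF₁ : IsFlat M f F₁) (hF₂ : IsFlat M f F₂)
    (𝓜 : Set (Finset α)) (h𝓜 : IsModularCut M f 𝓜)
    (hF₁mem : F₁ ∈ 𝓜) (hF₂mem : F₂ ∈ 𝓜)
    (hgen : ∀ 𝓝 : Set (Finset α), IsModularCut M f 𝓝 → F₁ ∈ 𝓝 → F₂ ∈ 𝓝 → 𝓜 ⊆ 𝓝)
    (hS : F₁ ∩ F₂ ∉ 𝓜)
    (hmin : ∀ G₁ ∈ 𝓜, ∀ G₂ ∈ 𝓜, G₁ ∩ G₂ ∉ 𝓜 →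
      modularDefect f F₁ F₂ ≤ modularDefect f G₁ G₂) :
    ∀ F ∈ 𝓜, F₁ ∩ F₂ ⊆ F ∧ modularDefect f F₁ F₂ < f F - f (F₁ ∩ F₂) :=
  statement_1_general M f hf F₁ F₂ 𝓜 h𝓜 hF₁mem hF₂mem hgen hS hmin
end

section
/- Let (f,M) be a polymatroid and F⊆M a flat. Then F contains a unique maximal cyclic flat C⊆F, i.e., a cyclic flat C⊆F that contains every cyclic flat contained in F. Moreover, for this C and every A with C⊆A⊆F, f(A)=f(C)+μ_f(A−C), where μ_f(A−C)=∑_{a∈A−C} f({a}). -/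
/-!
Let `C ⊆ F` consist of the elements `i ∈ F` with `f {i} = 0` or `f F - f (F \ {i}) < f {i}`; every
other element of `F` is a coloop of positive rank, with marginal exactly `f {i}`. Marginals shrink
on larger sets (submodularity) and never exceed `f {i}`, so a coloop of `F` adds exactly `f {i}` to
every subset of `F` missing it. This gives the rank formula on the interval `[C, F]`, and shows that
each `i ∈ C` has the same marginal in `C` as in `F`, so `C` is cyclic. Adding to `C` a coloop of
`F`, or an element outside the flat `F`, strictly raises the rank, so `C` is a flat. Marginals in a
cyclic `C' ⊆ F` dominate those in `F`, so `C' ⊆ C`.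
-/

open scoped Classical

/-- A cyclic flat: a flat `C` such that for every `i ∈ C`, either `f {i} = 0`
or `f C - f (C \ {i}) < f {i}`. -/
def IsCyclicFlat {α : Type*} [DecidableEq α] (M : Finset α) (f : Finset α → ℝ)
    (C : Finset α) : Prop :=
  IsFlat M f C ∧ ∀ i ∈ C, f {i} = 0 ∨ f C - f (C \ {i}) < f {i}

namespace IsPolymatroid

variable {α : Type*} [DecidableEq α] {M : Finset α} {f : Finset α → ℝ}

theorem map_empty (hf : IsPolymatroid M f) : f ∅ = 0 := hf.1

theorem nonneg (hf : IsPolymatroid M f) {A : Finset α} (hA : A ⊆ M) : 0 ≤ f A := hf.2.1 A hA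

theorem mono_s2 (hf : IsPolymatroid M f) {A B : Finset α} (hAB : A ⊆ B) (hB : B ⊆ M) :
    f A ≤ f B :=
  hf.2.2.1 A B hAB hB

theorem insert_sub_le_insert_sub (hf : IsPolymatroid M f) {A B : Finset α} {a : α}
    (hAB : A ⊆ B) (hB : insert a B ⊆ M) :
    f (insert a B) - f B ≤ f (insert a A) - f A := by
  have haA : insert a A ⊆ M := (Finset.insert_subset_insert a hAB).trans hB
  by_cases haB : a ∈ B
  · rw [Finset.insert_eq_of_mem haB, sub_self, sub_nonneg]
    exact hf.mono_s2 (Finset.subset_insert a A) haA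
  · have h := hf.2.2.2 (insert a A) B haA ((Finset.subset_insert a B).trans hB)
    rw [Finset.insert_union, Finset.union_eq_right.2 hAB, Finset.insert_inter_of_notMem haB,
      Finset.inter_eq_left.2 hAB] at h
    linarith

theorem sub_sdiff_singleton_le (hf : IsPolymatroid M f) {A B : Finset α} {i : α}
    (hi : i ∈ A) (hAB : A ⊆ B) (hB : B ⊆ M) :
    f B - f (B \ {i}) ≤ f A - f (A \ {i}) := by
  have h := hf.insert_sub_le_insert_sub (a := i) (Finset.erase_subset_erase i hAB)
    (by rwa [Finset.insert_erase (hAB hi)])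
  rwa [Finset.insert_erase hi, Finset.insert_erase (hAB hi), Finset.erase_eq,
    Finset.erase_eq] at h

theorem insert_le_add_singleton (hf : IsPolymatroid M f) {A : Finset α} {a : α}
    (h : insert a A ⊆ M) : f (insert a A) ≤ f A + f {a} := by
  have := hf.insert_sub_le_insert_sub (Finset.empty_subset A) h
  rw [Finset.insert_empty, hf.map_empty] at this
  linarith

theorem sub_sdiff_singleton_le_singleton (hf : IsPolymatroid M f) {A : Finset α} {i : α}
    (hi : i ∈ A) (hA : A ⊆ M) : f A - f (A \ {i}) ≤ f {i} := by
  have := hf.sub_sdiff_singleton_le (Finset.mem_singleton_self i)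
    (Finset.singleton_subset_iff.2 hi) hA
  rwa [Finset.sdiff_self, hf.map_empty, sub_zero] at this

theorem insert_eq_add_of_coloop (hf : IsPolymatroid M f) {B X : Finset α} {a : α}
    (haB : a ∈ B) (hB : B ⊆ M) (hcoloop : f B - f (B \ {a}) = f {a})
    (hXB : X ⊆ B) (haX : a ∉ X) : f (insert a X) = f X + f {a} := by
  have hle := hf.insert_le_add_singleton (Finset.insert_subset haB hXB |>.trans hB)
  have hge := hf.sub_sdiff_singleton_le (Finset.mem_insert_self a X)
    (Finset.insert_subset haB hXB) hB
  rw [← Finset.erase_eq (insert a X), Finset.erase_insert haX] at hge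
  linarith

theorem union_eq_add_sum_of_coloop (hf : IsPolymatroid M f) {B X S : Finset α}
    (hB : B ⊆ M) (hXB : X ⊆ B) (hSB : S ⊆ B) (hSX : Disjoint S X)
    (hcoloop : ∀ a ∈ S, f B - f (B \ {a}) = f {a}) :
    f (S ∪ X) = f X + ∑ a ∈ S, f {a} := by
  induction S using Finset.induction_on with
  | empty => simp
  | insert a S haS ih =>
    have haB := hSB (Finset.mem_insert_self a S)
    have hSB' := (Finset.subset_insert a S).trans hSB
    obtain ⟨haX, hSX'⟩ := Finset.disjoint_insert_left.1 hSX
    rw [Finset.insert_union, hf.insert_eq_add_of_coloop haB hB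
      (hcoloop a (Finset.mem_insert_self a S)) (Finset.union_subset hSB' hXB)
      (by simp [haS, haX]), ih hSB' hSX' (fun b hb => hcoloop b (Finset.mem_insert_of_mem hb)),
      Finset.sum_insert haS]
    ring

end IsPolymatroid

section CyclicPart

variable {α : Type*} [DecidableEq α] {M : Finset α} {f : Finset α → ℝ} {F : Finset α}

noncomputable def cyclicPart (f : Finset α → ℝ) (F : Finset α) : Finset α :=
  F.filter fun i => f {i} = 0 ∨ f F - f (F \ {i}) < f {i}

theorem cyclicPart_subset : cyclicPart f F ⊆ F := Finset.filter_subset _ _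

theorem coloop_of_mem_sdiff_cyclicPart (hf : IsPolymatroid M f) (hFM : F ⊆ M) {a : α}
    (ha : a ∈ F \ cyclicPart f F) : f F - f (F \ {a}) = f {a} ∧ 0 < f {a} := by
  obtain ⟨haF, haC⟩ := Finset.mem_sdiff.1 ha
  have hnot : f {a} ≠ 0 ∧ f {a} ≤ f F - f (F \ {a}) := by
    simpa [cyclicPart, haF] using haC
  exact ⟨(hf.sub_sdiff_singleton_le_singleton haF hFM).antisymm hnot.2,
    (hf.nonneg (Finset.singleton_subset_iff.2 (hFM haF))).lt_of_ne' hnot.1⟩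

theorem eq_cyclicPart_add_sum (hf : IsPolymatroid M f) (hFM : F ⊆ M) {A : Finset α}
    (hCA : cyclicPart f F ⊆ A) (hAF : A ⊆ F) :
    f A = f (cyclicPart f F) + ∑ a ∈ A \ cyclicPart f F, f {a} := by
  have h := hf.union_eq_add_sum_of_coloop hFM cyclicPart_subset
    (Finset.sdiff_subset.trans hAF) Finset.sdiff_disjoint
    fun a ha =>
      (coloop_of_mem_sdiff_cyclicPart hf hFM (Finset.sdiff_subset_sdiff hAF le_rfl ha)).1
  rwa [Finset.sdiff_union_of_subset hCA] at h

theorem sub_sdiff_singleton_cyclicPart (hf : IsPolymatroid M f) (hFM : F ⊆ M) {i : α}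
    (hi : i ∈ cyclicPart f F) :
    f (cyclicPart f F) - f (cyclicPart f F \ {i}) = f F - f (F \ {i}) := by
  have hF := eq_cyclicPart_add_sum hf hFM cyclicPart_subset subset_rfl
  have hFi := hf.union_eq_add_sum_of_coloop (S := F \ cyclicPart f F)
    (X := cyclicPart f F \ {i}) hFM (Finset.sdiff_subset.trans cyclicPart_subset)
    Finset.sdiff_subset
    (Finset.disjoint_of_subset_right Finset.sdiff_subset Finset.sdiff_disjoint)
    (fun a ha => (coloop_of_mem_sdiff_cyclicPart hf hFM ha).1)
  have hunion : F \ cyclicPart f F ∪ cyclicPart f F \ {i} = F \ {i} := by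
    ext x
    have hxF := @cyclicPart_subset _ _ f F x
    by_cases hx : x = i
    · simp [hx, hi]
    · simp only [Finset.mem_union, Finset.mem_sdiff, Finset.mem_singleton, hx]
      tauto
  rw [hunion] at hFi
  linarith

theorem subset_cyclicPart (hf : IsPolymatroid M f) (hFM : F ⊆ M) {C : Finset α} (hCF : C ⊆ F)
    (hC : ∀ i ∈ C, f {i} = 0 ∨ f C - f (C \ {i}) < f {i}) : C ⊆ cyclicPart f F := by
  intro i hi
  refine Finset.mem_filter.2 ⟨hCF hi, (hC i hi).imp_right fun hlt => ?_⟩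
  linarith [hf.sub_sdiff_singleton_le hi hCF hFM]

theorem cyclicPart_isFlat (hf : IsPolymatroid M f) (hF : IsFlat M f F) :
    IsFlat M f (cyclicPart f F) := by
  refine ⟨cyclicPart_subset.trans hF.1, fun G hCG hGM => ?_⟩
  obtain ⟨g, hgG, hgC⟩ := Finset.exists_of_ssubset hCG
  have hgM := hGM hgG
  suffices f (cyclicPart f F) < f (insert g (cyclicPart f F)) from
    this.trans_le (hf.mono_s2 (Finset.insert_subset hgG hCG.subset) hGM)
  by_cases hgF : g ∈ F
  · obtain ⟨hcoloop, hpos⟩ :=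
      coloop_of_mem_sdiff_cyclicPart hf hF.1 (Finset.mem_sdiff.2 ⟨hgF, hgC⟩)
    rw [hf.insert_eq_add_of_coloop hgF hF.1 hcoloop cyclicPart_subset hgC]
    linarith
  · have hlt := hF.2 _ (Finset.ssubset_insert hgF) (Finset.insert_subset hgM hF.1)
    linarith [hf.insert_sub_le_insert_sub (a := g) (cyclicPart_subset (f := f))
      (Finset.insert_subset hgM hF.1)]

theorem cyclicPart_isCyclicFlat (hf : IsPolymatroid M f) (hF : IsFlat M f F) :
    IsCyclicFlat M f (cyclicPart f F) := by
  refine ⟨cyclicPart_isFlat hf hF, fun i hi => ?_⟩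
  rw [sub_sdiff_singleton_cyclicPart hf hF.1 hi]
  exact (Finset.mem_filter.1 hi).2

end CyclicPart

/-- Every flat `F` of a polymatroid contains a unique maximal
cyclic flat `C` (one containing every cyclic flat contained in `F`), and for every
`A` with `C ⊆ A ⊆ F` we have `f A = f C + μ_f (A \ C)`, where
`μ_f (A \ C) = ∑_{a ∈ A \ C} f {a}`. -/
theorem statement_2 {α : Type*} [DecidableEq α]
    (M : Finset α) (f : Finset α → ℝ) (hf : IsPolymatroid M f)
    (F : Finset α) (hF : IsFlat M f F) :
    ∃! C : Finset α,
      IsCyclicFlat M f C ∧ C ⊆ F ∧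
      (∀ C', IsCyclicFlat M f C' → C' ⊆ F → C' ⊆ C) ∧
      (∀ A, C ⊆ A → A ⊆ F → f A = f C + ∑ a ∈ A \ C, f {a}) := by
  have hC := cyclicPart_isCyclicFlat hf hF
  have hmax : ∀ C', IsCyclicFlat M f C' → C' ⊆ F → C' ⊆ cyclicPart f F :=
    fun C' hC' hC'F => subset_cyclicPart hf hF.1 hC'F hC'.2
  refine ⟨cyclicPart f F,
    ⟨hC, cyclicPart_subset, hmax, fun A => eq_cyclicPart_add_sum hf hF.1⟩, ?_⟩
  rintro C ⟨hC', hCF, hCmax, -⟩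
  exact (hmax C hC' hCF).antisymm (hCmax _ hC cyclicPart_subset)
end

section
/- Let (r,L) be a ranked lattice on a finite set M and μ a measure on M. Suppose that for every pair of incomparable elements Z1,Z2∈L, r(Z1)+r(Z2) ≥ r(Z1∧Z2)+r(Z1∨Z2)+μ((Z1∩Z2)−(Z1∧Z2)). Then the convolution r'=r*μ is a polymatroid rank function on M: r' is nonnegative, monotone (A⊆B implies r'(A)≤r'(B)) and submodular (r'(A∪B)+r'(A∩B)≤r'(A)+r'(B) for all A,B⊆M). -/
/-!
Choose minimisers `Z₁`, `Z₂ ∈ L` of the convolution at `A` and `B`. The pair `Z₁ ∨ Z₂`,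
`Z₁ ∧ Z₂` (or `Z₂`, `Z₁` when `Z₁ ⊆ Z₂`) is admissible at `A ∪ B` and `A ∩ B`, and counting
the weight of every point shows that the measure lost on `A ∩ B` is paid for by
`μ ((Z₁ ∩ Z₂) \ (Z₁ ∧ Z₂))`, which the hypothesis on incomparable pairs covers.
-/

open Finset

section Convolution

variable {α : Type*} [DecidableEq α]

theorem sum_sdiff_union_add_sum_sdiff_inter_le {w : α → ℝ} (hw : ∀ a, 0 ≤ w a)
    {A B Z₁ Z₂ J K : Finset α} (hJ : Z₁ ∪ Z₂ ⊆ J) (hK : K ⊆ Z₁ ∩ Z₂) :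
    ∑ a ∈ (A ∪ B) \ J, w a + ∑ a ∈ (A ∩ B) \ K, w a ≤
      ∑ a ∈ A \ Z₁, w a + ∑ a ∈ B \ Z₂, w a + ∑ a ∈ (Z₁ ∩ Z₂) \ K, w a := by
  set U := A ∪ B ∪ Z₁ ∪ Z₂
  have sum_eq : ∀ S ⊆ U, ∑ a ∈ S, w a = ∑ a ∈ U, if a ∈ S then w a else 0 := fun S hS => by
    rw [sum_ite_mem, inter_eq_right.mpr hS]
  rw [sum_eq ((A ∪ B) \ J) (by grind), sum_eq ((A ∩ B) \ K) (by grind),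
    sum_eq (A \ Z₁) (by grind), sum_eq (B \ Z₂) (by grind), sum_eq ((Z₁ ∩ Z₂) \ K) (by grind),
    ← sum_add_distrib, ← sum_add_distrib, ← sum_add_distrib]
  refine sum_le_sum fun a _ => ?_
  have hZJ : a ∈ Z₁ ∨ a ∈ Z₂ → a ∈ J := fun h => hJ (mem_union.mpr h)
  have hKZ : a ∈ K → a ∈ Z₁ ∧ a ∈ Z₂ := fun h => mem_inter.mp (hK h)
  have := hw a
  simp only [mem_sdiff, mem_union, mem_inter]
  split_ifs <;> first | linarith | (exfalso; tauto)

variable (L : Finset (Finset α)) (hL : L.Nonempty) (r : Finset α → ℝ) (w : α → ℝ)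

noncomputable def convolution (A : Finset α) : ℝ :=
  L.inf' hL fun Z => r Z + ∑ a ∈ A \ Z, w a

def WeaklySubmodular : Prop :=
  ∀ Z₁ ∈ L, ∀ Z₂ ∈ L, ∃ J ∈ L, ∃ K ∈ L, Z₁ ∪ Z₂ ⊆ J ∧ K ⊆ Z₁ ∩ Z₂ ∧
    r J + r K + ∑ a ∈ (Z₁ ∩ Z₂) \ K, w a ≤ r Z₁ + r Z₂

theorem convolution_le {Z : Finset α} (hZ : Z ∈ L) (A : Finset α) :
    convolution L hL r w A ≤ r Z + ∑ a ∈ A \ Z, w a :=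
  inf'_le _ hZ

theorem exists_convolution_eq (A : Finset α) :
    ∃ Z ∈ L, convolution L hL r w A = r Z + ∑ a ∈ A \ Z, w a :=
  exists_mem_eq_inf' hL _

variable {L r w}

theorem convolution_nonneg (hr : ∀ Z ∈ L, 0 ≤ r Z) (hw : ∀ a, 0 ≤ w a) (A : Finset α) :
    0 ≤ convolution L hL r w A :=
  le_inf' _ _ fun Z hZ => add_nonneg (hr Z hZ) (sum_nonneg fun a _ => hw a)

theorem convolution_mono (hw : ∀ a, 0 ≤ w a) {A B : Finset α} (hAB : A ⊆ B) :
    convolution L hL r w A ≤ convolution L hL r w B := by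
  obtain ⟨Z, hZ, hB⟩ := exists_convolution_eq L hL r w B
  calc convolution L hL r w A ≤ r Z + ∑ a ∈ A \ Z, w a := convolution_le L hL r w hZ A
    _ ≤ r Z + ∑ a ∈ B \ Z, w a := by
      gcongr
      exact fun a _ _ => hw a
    _ = convolution L hL r w B := hB.symm

theorem convolution_union_add_inter_le (hw : ∀ a, 0 ≤ w a) (hrw : WeaklySubmodular L r w)
    (A B : Finset α) :
    convolution L hL r w (A ∪ B) + convolution L hL r w (A ∩ B) ≤
      convolution L hL r w A + convolution L hL r w B := by
  obtain ⟨Z₁, hZ₁, hA⟩ := exists_convolution_eq L hL r w A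
  obtain ⟨Z₂, hZ₂, hB⟩ := exists_convolution_eq L hL r w B
  obtain ⟨J, hJ, K, hK, hZJ, hKZ, hJK⟩ := hrw Z₁ hZ₁ Z₂ hZ₂
  have hU := convolution_le L hL r w hJ (A ∪ B)
  have hI := convolution_le L hL r w hK (A ∩ B)
  have hsum := sum_sdiff_union_add_sum_sdiff_inter_le (A := A) (B := B) hw hZJ hKZ
  linarith

theorem weaklySubmodular_of_lattice {meet join : Finset α → Finset α → Finset α}
    (hmeet : ∀ Z₁ ∈ L, ∀ Z₂ ∈ L, meet Z₁ Z₂ ∈ L ∧ meet Z₁ Z₂ ⊆ Z₁ ∧ meet Z₁ Z₂ ⊆ Z₂)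
    (hjoin : ∀ Z₁ ∈ L, ∀ Z₂ ∈ L, join Z₁ Z₂ ∈ L ∧ Z₁ ⊆ join Z₁ Z₂ ∧ Z₂ ⊆ join Z₁ Z₂)
    (hcond : ∀ Z₁ ∈ L, ∀ Z₂ ∈ L, ¬ Z₁ ⊆ Z₂ → ¬ Z₂ ⊆ Z₁ →
      r (meet Z₁ Z₂) + r (join Z₁ Z₂) + ∑ a ∈ (Z₁ ∩ Z₂) \ meet Z₁ Z₂, w a ≤ r Z₁ + r Z₂) :
    WeaklySubmodular L r w := by
  intro Z₁ hZ₁ Z₂ hZ₂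
  by_cases h₁₂ : Z₁ ⊆ Z₂
  · exact ⟨Z₂, hZ₂, Z₁, hZ₁, union_subset h₁₂ subset_rfl, subset_inter subset_rfl h₁₂,
      by simp [inter_eq_left.mpr h₁₂, add_comm]⟩
  by_cases h₂₁ : Z₂ ⊆ Z₁
  · exact ⟨Z₁, hZ₁, Z₂, hZ₂, union_subset subset_rfl h₂₁, subset_inter h₂₁ subset_rfl,
      by simp [inter_eq_right.mpr h₂₁]⟩
  obtain ⟨hmL, hm₁, hm₂⟩ := hmeet Z₁ hZ₁ Z₂ hZ₂
  obtain ⟨hjL, hj₁, hj₂⟩ := hjoin Z₁ hZ₁ Z₂ hZ₂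
  exact ⟨join Z₁ Z₂, hjL, meet Z₁ Z₂, hmL, union_subset hj₁ hj₂, subset_inter hm₁ hm₂,
    by linarith [hcond Z₁ hZ₁ Z₂ hZ₂ h₁₂ h₂₁]⟩

end Convolution

/-- Let `(r, L)` be a ranked lattice on the finite set `M` (a
nonempty family of subsets of `M` in which every pair has a greatest lower bound
`meet` and a least upper bound `join` with respect to inclusion, with a nonnegative
rank function `r`), and let `μ` be a measure on `M`.  If for every pair of
incomparable `Z₁, Z₂ ∈ L` we have
`r Z₁ + r Z₂ ≥ r (Z₁ ∧ Z₂) + r (Z₁ ∨ Z₂) + μ ((Z₁ ∩ Z₂) \ (Z₁ ∧ Z₂))`,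
then the convolution `r' = r * μ`, `r' A = min { r Z + μ (A \ Z) : Z ∈ L }`,
is a polymatroid rank function on `M`: nonnegative, monotone and submodular. -/
theorem statement_5 {α : Type*} [DecidableEq α]
    (M : Finset α) (L : Finset (Finset α)) (hLne : L.Nonempty)
    (hLsub : ∀ Z ∈ L, Z ⊆ M)
    (meet join : Finset α → Finset α → Finset α)
    (hmeet : ∀ Z₁ ∈ L, ∀ Z₂ ∈ L, meet Z₁ Z₂ ∈ L ∧ meet Z₁ Z₂ ⊆ Z₁ ∧ meet Z₁ Z₂ ⊆ Z₂ ∧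
      ∀ W ∈ L, W ⊆ Z₁ → W ⊆ Z₂ → W ⊆ meet Z₁ Z₂)
    (hjoin : ∀ Z₁ ∈ L, ∀ Z₂ ∈ L, join Z₁ Z₂ ∈ L ∧ Z₁ ⊆ join Z₁ Z₂ ∧ Z₂ ⊆ join Z₁ Z₂ ∧
      ∀ W ∈ L, Z₁ ⊆ W → Z₂ ⊆ W → join Z₁ Z₂ ⊆ W)
    (r : Finset α → ℝ) (hr : ∀ Z ∈ L, 0 ≤ r Z)
    (μ : Finset α → ℝ)
    (hμnn : ∀ A, A ⊆ M → 0 ≤ μ A)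
    (hμadd : ∀ A, A ⊆ M → μ A = ∑ a ∈ A, μ {a})
    (hcond : ∀ Z₁ ∈ L, ∀ Z₂ ∈ L, ¬ Z₁ ⊆ Z₂ → ¬ Z₂ ⊆ Z₁ →
      r (meet Z₁ Z₂) + r (join Z₁ Z₂) + μ ((Z₁ ∩ Z₂) \ meet Z₁ Z₂) ≤ r Z₁ + r Z₂)
    (r' : Finset α → ℝ)
    (hr' : ∀ A, r' A = L.inf' hLne (fun Z => r Z + μ (A \ Z))) :
    (∀ A, A ⊆ M → 0 ≤ r' A) ∧
    (∀ A B, A ⊆ B → B ⊆ M → r' A ≤ r' B) ∧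
    (∀ A B, A ⊆ M → B ⊆ M → r' (A ∪ B) + r' (A ∩ B) ≤ r' A + r' B) := by
  -- `μ` is only known to be additive on subsets of `M`, so the weights are cut off outside `M`.
  set w : α → ℝ := fun a => if a ∈ M then μ {a} else 0
  have hw : ∀ a, 0 ≤ w a := fun a => by
    by_cases ha : a ∈ M
    · simpa [w, ha] using hμnn {a} (singleton_subset_iff.mpr ha)
    · simp [w, ha]
  have hμw : ∀ S ⊆ M, μ S = ∑ a ∈ S, w a := fun S hS => by
    rw [hμadd S hS]
    exact sum_congr rfl fun a ha => (if_pos (hS ha)).symm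
  have hr'w : ∀ A ⊆ M, r' A = convolution L hLne r w A := fun A hA => by
    rw [hr']
    exact inf'_congr hLne rfl fun Z _ => by rw [hμw _ (sdiff_subset.trans hA)]
  have hrw : WeaklySubmodular L r w :=
    weaklySubmodular_of_lattice
      (fun Z₁ h₁ Z₂ h₂ => (hmeet Z₁ h₁ Z₂ h₂).imp_right (And.imp_right And.left))
      (fun Z₁ h₁ Z₂ h₂ => (hjoin Z₁ h₁ Z₂ h₂).imp_right (And.imp_right And.left))
      fun Z₁ h₁ Z₂ h₂ h₁₂ h₂₁ => by
        rw [← hμw _ (sdiff_subset.trans (inter_subset_left.trans (hLsub Z₁ h₁)))]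
        exact hcond Z₁ h₁ Z₂ h₂ h₁₂ h₂₁
  refine ⟨fun A hA => ?_, fun A B hAB hB => ?_, fun A B hA hB => ?_⟩
  · rw [hr'w A hA]
    exact convolution_nonneg hLne hr hw A
  · rw [hr'w A (hAB.trans hB), hr'w B hB]
    exact convolution_mono hLne hw hAB
  · rw [hr'w _ (union_subset hA hB), hr'w _ (inter_subset_left.trans hA), hr'w A hA, hr'w B hB]
    exact convolution_union_add_inter_le hLne hw hrw A B
end

section
/- Let (r,L) be a ranked lattice on a finite set M and μ a measure on M. Assume: (i) for all Z1,Z2∈L with Z1⊊Z2, 0 ≤ r(Z2)−r(Z1) ≤ μ(Z2−Z1); and (ii) for every pair of incomparable Z1,Z2∈L, r(Z1)+r(Z2) ≥ r(Z1∧Z2)+r(Z1∨Z2)+μ((Z1∩Z2)−(Z1∧Z2)). Then r'=r*μ is nonnegative, monotone and submodular on subsets of M, and r'(A)=r(A) for every A∈L. -/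
/-!
Every bound reduces to a pointwise comparison of indicator functions once the measure is
written as a sum of point masses over `M`.  Submodularity: if `Z₁`, `Z₂` are minimizers for
`A`, `B`, test `A ∪ B` against `Z₁ ∨ Z₂` and `A ∩ B` against `Z₁ ∧ Z₂`; the mass lost on
`(Z₁ ∩ Z₂) \ (Z₁ ∧ Z₂)` is paid for by condition (ii).  Agreement on `L`: for `A ∈ L` and any
`Z ∈ L`, condition (i) along `A ∧ Z ⊆ A ⊆ A ∨ Z` combined with (ii) gives
`r A ≤ r Z + μ (A \ Z)`, while `Z = A` gives the reverse bound.
-/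

open Finset

section RankedLattice

variable {α : Type*} {M : Finset α} {μ : Finset α → ℝ}

theorem measure_empty_of_eq_sum (hμadd : ∀ A, A ⊆ M → μ A = ∑ a ∈ A, μ {a}) : μ ∅ = 0 := by
  simpa using hμadd ∅ (empty_subset M)

theorem measure_mono (hμnn : ∀ A, A ⊆ M → 0 ≤ μ A)
    (hμadd : ∀ A, A ⊆ M → μ A = ∑ a ∈ A, μ {a}) {S T : Finset α} (hST : S ⊆ T) (hT : T ⊆ M) :
    μ S ≤ μ T := by
  rw [hμadd S (hST.trans hT), hμadd T hT]
  exact sum_le_sum_of_subset_of_nonneg hST fun a ha _ ↦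
    hμnn {a} (singleton_subset_iff.mpr (hT ha))

variable [DecidableEq α]

theorem measure_eq_sum_ite (hμadd : ∀ A, A ⊆ M → μ A = ∑ a ∈ A, μ {a}) {S : Finset α}
    (hS : S ⊆ M) : μ S = ∑ a ∈ M, if a ∈ S then μ {a} else 0 := by
  rw [hμadd S hS, sum_ite_mem, inter_eq_right.mpr hS]

theorem measure_sdiff_eq_add (hμadd : ∀ A, A ⊆ M → μ A = ∑ a ∈ A, μ {a}) {A W Z : Finset α}
    (hA : A ⊆ M) (hWZ : W ⊆ Z) : μ (A \ W) = μ (A \ Z) + μ ((A ∩ Z) \ W) := by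
  rw [measure_eq_sum_ite hμadd (sdiff_subset.trans hA),
    measure_eq_sum_ite hμadd (sdiff_subset.trans hA),
    measure_eq_sum_ite hμadd (sdiff_subset.trans (inter_subset_left.trans hA)),
    ← sum_add_distrib]
  refine sum_congr rfl fun x _ ↦ ?_
  have := @hWZ x
  simp only [mem_sdiff, mem_inter]
  split_ifs <;> first | (exfalso; tauto) | ring

theorem measure_union_sdiff_add_measure_inter_sdiff_le (hμnn : ∀ A, A ⊆ M → 0 ≤ μ A)
    (hμadd : ∀ A, A ⊆ M → μ A = ∑ a ∈ A, μ {a}) {A B Z₁ Z₂ W J : Finset α}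
    (hA : A ⊆ M) (hB : B ⊆ M) (hZ₁ : Z₁ ⊆ M) (hZ₁J : Z₁ ⊆ J) (hZ₂J : Z₂ ⊆ J) :
    μ ((A ∪ B) \ J) + μ ((A ∩ B) \ W) ≤ μ (A \ Z₁) + μ (B \ Z₂) + μ ((Z₁ ∩ Z₂) \ W) := by
  rw [measure_eq_sum_ite hμadd (sdiff_subset.trans (union_subset hA hB)),
    measure_eq_sum_ite hμadd (sdiff_subset.trans (inter_subset_left.trans hA)),
    measure_eq_sum_ite hμadd (sdiff_subset.trans hA),
    measure_eq_sum_ite hμadd (sdiff_subset.trans hB),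
    measure_eq_sum_ite hμadd (sdiff_subset.trans (inter_subset_left.trans hZ₁)),
    ← sum_add_distrib, ← sum_add_distrib, ← sum_add_distrib]
  refine sum_le_sum fun x hx ↦ ?_
  have := hμnn {x} (singleton_subset_iff.mpr hx)
  have := @hZ₁J x
  have := @hZ₂J x
  simp only [mem_sdiff, mem_union, mem_inter]
  split_ifs <;> first | linarith | tauto

section Lattice

def IsMeetOn (L : Finset (Finset α)) (meet : Finset α → Finset α → Finset α) : Prop :=
  ∀ Z₁ ∈ L, ∀ Z₂ ∈ L, meet Z₁ Z₂ ∈ L ∧ meet Z₁ Z₂ ⊆ Z₁ ∧ meet Z₁ Z₂ ⊆ Z₂ ∧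
    ∀ W ∈ L, W ⊆ Z₁ → W ⊆ Z₂ → W ⊆ meet Z₁ Z₂

def IsJoinOn (L : Finset (Finset α)) (join : Finset α → Finset α → Finset α) : Prop :=
  ∀ Z₁ ∈ L, ∀ Z₂ ∈ L, join Z₁ Z₂ ∈ L ∧ Z₁ ⊆ join Z₁ Z₂ ∧ Z₂ ⊆ join Z₁ Z₂ ∧
    ∀ W ∈ L, Z₁ ⊆ W → Z₂ ⊆ W → join Z₁ Z₂ ⊆ W

variable {L : Finset (Finset α)} {meet join : Finset α → Finset α → Finset α}
  {r : Finset α → ℝ} {Z₁ Z₂ : Finset α}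

theorem meet_eq_inter_of_inter_mem
    (hmeet : IsMeetOn L meet) (h₁ : Z₁ ∈ L) (h₂ : Z₂ ∈ L) (h : Z₁ ∩ Z₂ ∈ L) :
    meet Z₁ Z₂ = Z₁ ∩ Z₂ :=
  let ⟨_, hm₁, hm₂, hglb⟩ := hmeet Z₁ h₁ Z₂ h₂
  (subset_inter hm₁ hm₂).antisymm (hglb _ h inter_subset_left inter_subset_right)

theorem join_eq_union_of_union_mem
    (hjoin : IsJoinOn L join) (h₁ : Z₁ ∈ L) (h₂ : Z₂ ∈ L) (h : Z₁ ∪ Z₂ ∈ L) :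
    join Z₁ Z₂ = Z₁ ∪ Z₂ :=
  let ⟨_, hj₁, hj₂, hlub⟩ := hjoin Z₁ h₁ Z₂ h₂
  (hlub _ h subset_union_left subset_union_right).antisymm (union_subset hj₁ hj₂)

/-- Condition (ii) extends to comparable pairs, where meet and join are `∩` and `∪`. -/
theorem rank_meet_add_rank_join_le
    (hmeet : IsMeetOn L meet) (hjoin : IsJoinOn L join)
    (hμempty : μ ∅ = 0)
    (hcond : ∀ Z₁ ∈ L, ∀ Z₂ ∈ L, ¬ Z₁ ⊆ Z₂ → ¬ Z₂ ⊆ Z₁ →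
      r (meet Z₁ Z₂) + r (join Z₁ Z₂) + μ ((Z₁ ∩ Z₂) \ meet Z₁ Z₂) ≤ r Z₁ + r Z₂)
    (h₁ : Z₁ ∈ L) (h₂ : Z₂ ∈ L) :
    r (meet Z₁ Z₂) + r (join Z₁ Z₂) + μ ((Z₁ ∩ Z₂) \ meet Z₁ Z₂) ≤ r Z₁ + r Z₂ := by
  by_cases h₁₂ : Z₁ ⊆ Z₂
  · rw [meet_eq_inter_of_inter_mem hmeet h₁ h₂ (by rwa [inter_eq_left.mpr h₁₂]),
      join_eq_union_of_union_mem hjoin h₁ h₂ (by rwa [union_eq_right.mpr h₁₂]),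
      inter_eq_left.mpr h₁₂, union_eq_right.mpr h₁₂, sdiff_self, bot_eq_empty, hμempty, add_zero]
  by_cases h₂₁ : Z₂ ⊆ Z₁
  · rw [meet_eq_inter_of_inter_mem hmeet h₁ h₂ (by rwa [inter_eq_right.mpr h₂₁]),
      join_eq_union_of_union_mem hjoin h₁ h₂ (by rwa [union_eq_left.mpr h₂₁]),
      inter_eq_right.mpr h₂₁, union_eq_left.mpr h₂₁, sdiff_self, bot_eq_empty, hμempty, add_zero,
      add_comm]
  exact hcond Z₁ h₁ Z₂ h₂ h₁₂ h₂₁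

theorem rank_le_rank_of_subset
    (hchain : ∀ Z₁ ∈ L, ∀ Z₂ ∈ L, Z₁ ⊂ Z₂ →
      0 ≤ r Z₂ - r Z₁ ∧ r Z₂ - r Z₁ ≤ μ (Z₂ \ Z₁))
    (h₁ : Z₁ ∈ L) (h₂ : Z₂ ∈ L) (h : Z₁ ⊆ Z₂) : r Z₁ ≤ r Z₂ := by
  obtain rfl | hss := h.eq_or_ssubset
  · rfl
  · linarith [(hchain Z₁ h₁ Z₂ h₂ hss).1]

theorem rank_le_rank_add_measure_sdiff
    (hchain : ∀ Z₁ ∈ L, ∀ Z₂ ∈ L, Z₁ ⊂ Z₂ →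
      0 ≤ r Z₂ - r Z₁ ∧ r Z₂ - r Z₁ ≤ μ (Z₂ \ Z₁))
    (hμempty : μ ∅ = 0) (h₁ : Z₁ ∈ L) (h₂ : Z₂ ∈ L) (h : Z₁ ⊆ Z₂) :
    r Z₂ ≤ r Z₁ + μ (Z₂ \ Z₁) := by
  obtain rfl | hss := h.eq_or_ssubset
  · simp [hμempty]
  · linarith [(hchain Z₁ h₁ Z₂ h₂ hss).2]

end Lattice

section Convolution

variable {L : Finset (Finset α)} (hL : L.Nonempty) {r : Finset α → ℝ}

/-- The convolution `r * μ`. -/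
def rankConv (r μ : Finset α → ℝ) (A : Finset α) : ℝ :=
  L.inf' hL fun Z ↦ r Z + μ (A \ Z)

theorem rankConv_le {A Z : Finset α} (hZ : Z ∈ L) : rankConv hL r μ A ≤ r Z + μ (A \ Z) :=
  inf'_le _ hZ

theorem exists_rankConv_eq (A : Finset α) : ∃ Z ∈ L, rankConv hL r μ A = r Z + μ (A \ Z) :=
  exists_mem_eq_inf' hL _

theorem rankConv_nonneg {A : Finset α} (hr : ∀ Z ∈ L, 0 ≤ r Z)
    (hμnn : ∀ A, A ⊆ M → 0 ≤ μ A) (hA : A ⊆ M) : 0 ≤ rankConv hL r μ A :=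
  le_inf' _ _ fun Z hZ ↦ add_nonneg (hr Z hZ) (hμnn _ (sdiff_subset.trans hA))

theorem rankConv_mono {A B : Finset α} (hμnn : ∀ A, A ⊆ M → 0 ≤ μ A)
    (hμadd : ∀ A, A ⊆ M → μ A = ∑ a ∈ A, μ {a}) (hAB : A ⊆ B) (hB : B ⊆ M) :
    rankConv hL r μ A ≤ rankConv hL r μ B := by
  obtain ⟨Z, hZ, hBZ⟩ : ∃ Z ∈ L, rankConv hL r μ B = _ := exists_rankConv_eq hL B
  calc rankConv hL r μ A ≤ r Z + μ (A \ Z) := rankConv_le hL hZ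
    _ ≤ r Z + μ (B \ Z) := by
      gcongr
      exact measure_mono hμnn hμadd (sdiff_subset_sdiff hAB subset_rfl) (sdiff_subset.trans hB)
    _ = rankConv hL r μ B := hBZ.symm

theorem rankConv_union_add_rankConv_inter_le {A B : Finset α}
    {meet join : Finset α → Finset α → Finset α} (hLsub : ∀ Z ∈ L, Z ⊆ M)
    (hmeet : IsMeetOn L meet) (hjoin : IsJoinOn L join)
    (hμnn : ∀ A, A ⊆ M → 0 ≤ μ A) (hμadd : ∀ A, A ⊆ M → μ A = ∑ a ∈ A, μ {a})
    (hcond : ∀ Z₁ ∈ L, ∀ Z₂ ∈ L, ¬ Z₁ ⊆ Z₂ → ¬ Z₂ ⊆ Z₁ →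
      r (meet Z₁ Z₂) + r (join Z₁ Z₂) + μ ((Z₁ ∩ Z₂) \ meet Z₁ Z₂) ≤ r Z₁ + r Z₂)
    (hA : A ⊆ M) (hB : B ⊆ M) :
    rankConv hL r μ (A ∪ B) + rankConv hL r μ (A ∩ B) ≤ rankConv hL r μ A + rankConv hL r μ B := by
  obtain ⟨Z₁, hZ₁, hAZ₁⟩ : ∃ Z ∈ L, rankConv hL r μ A = _ := exists_rankConv_eq hL A
  obtain ⟨Z₂, hZ₂, hBZ₂⟩ : ∃ Z ∈ L, rankConv hL r μ B = _ := exists_rankConv_eq hL B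
  obtain ⟨hmeetL, -⟩ := hmeet Z₁ hZ₁ Z₂ hZ₂
  obtain ⟨hjoinL, hZ₁join, hZ₂join, -⟩ := hjoin Z₁ hZ₁ Z₂ hZ₂
  have hunion : rankConv hL r μ (A ∪ B) ≤ _ := rankConv_le hL hjoinL
  have hinter : rankConv hL r μ (A ∩ B) ≤ _ := rankConv_le hL hmeetL
  have hrank := rank_meet_add_rank_join_le hmeet hjoin (measure_empty_of_eq_sum hμadd) hcond
    hZ₁ hZ₂
  have hmeasure := measure_union_sdiff_add_measure_inter_sdiff_le (W := meet Z₁ Z₂) hμnn hμadd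
    hA hB (hLsub Z₁ hZ₁) hZ₁join hZ₂join
  linarith

theorem rankConv_eq_of_mem {A : Finset α}
    {meet join : Finset α → Finset α → Finset α} (hLsub : ∀ Z ∈ L, Z ⊆ M)
    (hmeet : IsMeetOn L meet) (hjoin : IsJoinOn L join)
    (hμadd : ∀ A, A ⊆ M → μ A = ∑ a ∈ A, μ {a})
    (hchain : ∀ Z₁ ∈ L, ∀ Z₂ ∈ L, Z₁ ⊂ Z₂ →
      0 ≤ r Z₂ - r Z₁ ∧ r Z₂ - r Z₁ ≤ μ (Z₂ \ Z₁))
    (hcond : ∀ Z₁ ∈ L, ∀ Z₂ ∈ L, ¬ Z₁ ⊆ Z₂ → ¬ Z₂ ⊆ Z₁ →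
      r (meet Z₁ Z₂) + r (join Z₁ Z₂) + μ ((Z₁ ∩ Z₂) \ meet Z₁ Z₂) ≤ r Z₁ + r Z₂)
    (hA : A ∈ L) : rankConv hL r μ A = r A := by
  have hμempty := measure_empty_of_eq_sum hμadd
  refine le_antisymm ?_ (le_inf' _ _ fun Z hZ ↦ ?_)
  · simpa [hμempty] using (rankConv_le hL hA : rankConv hL r μ A ≤ _)
  obtain ⟨hmeetL, hmeetA, hmeetZ, -⟩ := hmeet A hA Z hZ
  obtain ⟨hjoinL, hAjoin, -⟩ := hjoin A hA Z hZ
  have hmeet_le := rank_le_rank_add_measure_sdiff hchain hμempty hmeetL hA hmeetA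
  have hle_join := rank_le_rank_of_subset hchain hA hjoinL hAjoin
  have hrank := rank_meet_add_rank_join_le hmeet hjoin hμempty hcond hA hZ
  have hsplit := measure_sdiff_eq_add hμadd (hLsub A hA) hmeetZ
  linarith

end Convolution

end RankedLattice

/-- Let `(r, L)` be a ranked lattice on the finite set `M` and `μ`
a measure on `M`.  Assume (i) for `Z₁ ⊊ Z₂` in `L`, `0 ≤ r Z₂ - r Z₁ ≤ μ (Z₂ \ Z₁)`,
and (ii) for every incomparable pair `Z₁, Z₂ ∈ L`,
`r Z₁ + r Z₂ ≥ r (Z₁ ∧ Z₂) + r (Z₁ ∨ Z₂) + μ ((Z₁ ∩ Z₂) \ (Z₁ ∧ Z₂))`.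
Then the convolution `r' = r * μ` is nonnegative, monotone and submodular on
subsets of `M`, and `r' A = r A` for every `A ∈ L`. -/
theorem statement_6 {α : Type*} [DecidableEq α]
    (M : Finset α) (L : Finset (Finset α)) (hLne : L.Nonempty)
    (hLsub : ∀ Z ∈ L, Z ⊆ M)
    (meet join : Finset α → Finset α → Finset α)
    (hmeet : ∀ Z₁ ∈ L, ∀ Z₂ ∈ L, meet Z₁ Z₂ ∈ L ∧ meet Z₁ Z₂ ⊆ Z₁ ∧ meet Z₁ Z₂ ⊆ Z₂ ∧
      ∀ W ∈ L, W ⊆ Z₁ → W ⊆ Z₂ → W ⊆ meet Z₁ Z₂)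
    (hjoin : ∀ Z₁ ∈ L, ∀ Z₂ ∈ L, join Z₁ Z₂ ∈ L ∧ Z₁ ⊆ join Z₁ Z₂ ∧ Z₂ ⊆ join Z₁ Z₂ ∧
      ∀ W ∈ L, Z₁ ⊆ W → Z₂ ⊆ W → join Z₁ Z₂ ⊆ W)
    (r : Finset α → ℝ) (hr : ∀ Z ∈ L, 0 ≤ r Z)
    (μ : Finset α → ℝ)
    (hμnn : ∀ A, A ⊆ M → 0 ≤ μ A)
    (hμadd : ∀ A, A ⊆ M → μ A = ∑ a ∈ A, μ {a})
    (hchain : ∀ Z₁ ∈ L, ∀ Z₂ ∈ L, Z₁ ⊂ Z₂ →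
      0 ≤ r Z₂ - r Z₁ ∧ r Z₂ - r Z₁ ≤ μ (Z₂ \ Z₁))
    (hcond : ∀ Z₁ ∈ L, ∀ Z₂ ∈ L, ¬ Z₁ ⊆ Z₂ → ¬ Z₂ ⊆ Z₁ →
      r (meet Z₁ Z₂) + r (join Z₁ Z₂) + μ ((Z₁ ∩ Z₂) \ meet Z₁ Z₂) ≤ r Z₁ + r Z₂)
    (r' : Finset α → ℝ)
    (hr' : ∀ A, r' A = L.inf' hLne (fun Z => r Z + μ (A \ Z))) :
    (∀ A, A ⊆ M → 0 ≤ r' A) ∧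
    (∀ A B, A ⊆ B → B ⊆ M → r' A ≤ r' B) ∧
    (∀ A B, A ⊆ M → B ⊆ M → r' (A ∪ B) + r' (A ∩ B) ≤ r' A + r' B) ∧
    (∀ A ∈ L, r' A = r A) := by
  obtain rfl : r' = rankConv hLne r μ := funext hr'
  exact ⟨fun A hA ↦ rankConv_nonneg hLne hr hμnn hA,
    fun A B hAB hB ↦ rankConv_mono hLne hμnn hμadd hAB hB,
    fun A B hA hB ↦ rankConv_union_add_rankConv_inter_le hLne hLsub hmeet hjoin hμnn hμadd hcond
      hA hB,
    fun A hA ↦ rankConv_eq_of_mem hLne hLsub hmeet hjoin hμadd hchain hcond hA⟩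
end

section
/- Let (f,M) be a polymatroid, N⊇M a finite set, (r,L) a ranked lattice on subsets of N, and μ a measure on N. Suppose: (1) for all Z∈L, Z∩M∈L; (2) every cyclic flat of (f,M) belongs to L; (3) if Z1,Z2∈L with Z1⊊Z2 then r(Z1)≤r(Z2); (4) if Z∈L and Z⊆M then r(Z)=f(Z); and (5) μ({a})=f({a}) for all a∈M. Then the convolution r'=r*μ satisfies r'(A)=f(A) for all A⊆M. -/
open scoped Classical

/-!
The lower bound `f A ≤ r Z + μ (A \ Z)` holds for every `Z ∈ L`: subadditivity gives
`f A ≤ f (A ∩ Z) + μ (A \ Z)`, and `f (A ∩ Z) ≤ f (Z ∩ M) = r (Z ∩ M) ≤ r Z`.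
It is attained at a cyclic flat: starting from a flat `C ⊇ A` of the same rank, peel off
coloops `i` (those with `f C = f (C \ {i}) + f {i} > f (C \ {i})`) one at a time; each removal
keeps a flat and trades `f {i}` of rank for `f {i} = μ {i}` of measure, and a flat without
such elements is cyclic, hence in `L`.
-/

namespace IsPolymatroid

variable {α : Type*} [DecidableEq α] {M : Finset α} {f : Finset α → ℝ}

lemma union_le_add (hf : IsPolymatroid M f) {A B : Finset α} (hA : A ⊆ M) (hB : B ⊆ M) :
    f (A ∪ B) ≤ f A + f B := by
  have hsub := hf.2.2.2 A B hA hB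
  have hnn := hf.2.1 (A ∩ B) (Finset.inter_subset_left.trans hA)
  linarith

lemma union_le_add_sum_singleton (hf : IsPolymatroid M f) {B : Finset α} (hB : B ⊆ M) :
    ∀ S ⊆ M, f (B ∪ S) ≤ f B + ∑ a ∈ S, f {a} := by
  intro S
  induction S using Finset.induction_on with
  | empty => simp
  | @insert a S haS ih =>
    intro hS
    have haM : {a} ⊆ M := Finset.singleton_subset_iff.mpr (hS (Finset.mem_insert_self a S))
    have hSM : S ⊆ M := (Finset.subset_insert a S).trans hS
    have hstep := hf.union_le_add (Finset.union_subset hB hSM) haM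
    rw [Finset.sum_insert haS, Finset.union_insert, ← Finset.union_singleton]
    linarith [ih hSM]

lemma le_inter_add_sum_sdiff (hf : IsPolymatroid M f) {A : Finset α} (hA : A ⊆ M)
    (Z : Finset α) : f A ≤ f (A ∩ Z) + ∑ a ∈ A \ Z, f {a} := by
  have h := hf.union_le_add_sum_singleton (B := A ∩ Z) (Finset.inter_subset_left.trans hA)
    (A \ Z) (Finset.sdiff_subset.trans hA)
  rwa [show A ∩ Z ∪ A \ Z = A from sup_inf_sdiff A Z] at h

lemma exists_isFlat_superset (hf : IsPolymatroid M f) {X : Finset α} (hX : X ⊆ M) :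
    ∃ C, X ⊆ C ∧ IsFlat M f C ∧ f C = f X := by
  obtain ⟨C, hXC, hCmax⟩ := Finset.exists_le_maximal ((M.powerset.filter fun G => f G = f X))
    (Finset.mem_filter.mpr ⟨Finset.mem_powerset.mpr hX, rfl⟩)
  obtain ⟨hCM, hfC⟩ := Finset.mem_filter.mp hCmax.1
  rw [Finset.mem_powerset] at hCM
  refine ⟨C, hXC, ⟨hCM, fun G hCG hGM => ?_⟩, hfC⟩
  refine (hf.2.2.1 C G hCG.subset hGM).lt_of_ne fun hCG_eq => hCG.not_subset ?_
  exact hCmax.2 (Finset.mem_filter.mpr ⟨Finset.mem_powerset.mpr hGM, hCG_eq ▸ hfC⟩) hCG.subset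

lemma isFlat_sdiff_singleton (hf : IsPolymatroid M f) {C : Finset α} (hC : IsFlat M f C)
    {i : α} (hi : i ∈ C) (hpos : 0 < f {i}) (hcoloop : f (C \ {i}) + f {i} ≤ f C) :
    IsFlat M f (C \ {i}) := by
  have hiM : {i} ⊆ M := Finset.singleton_subset_iff.mpr (hC.1 hi)
  refine ⟨Finset.sdiff_subset.trans hC.1, fun G hG hGM => ?_⟩
  by_cases hiG : i ∈ G
  · have hCG : C ⊆ G := by
      rw [← Finset.sdiff_union_of_subset (Finset.singleton_subset_iff.mpr hi)]
      exact Finset.union_subset hG.subset (Finset.singleton_subset_iff.mpr hiG)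
    linarith [hf.2.2.1 C G hCG hGM]
  · have hCGi : C ⊂ G ∪ {i} := by
      obtain ⟨g, hgG, hgC⟩ := Finset.exists_of_ssubset hG
      refine Finset.ssubset_iff_of_subset (fun x hx => ?_) |>.mpr
        ⟨g, Finset.mem_union_left _ hgG, fun hg => hgC (by grind)⟩
      by_cases hxi : x = i
      · simp [hxi]
      · exact Finset.mem_union_left _ (hG.subset (by simp [hx, hxi]))
    linarith [hC.2 _ hCGi (Finset.union_subset hGM hiM), hf.union_le_add hGM hiM]

lemma exists_isCyclicFlat_subset (hf : IsPolymatroid M f) {C : Finset α} (hC : IsFlat M f C) :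
    ∃ D ⊆ C, IsCyclicFlat M f D ∧ f D + ∑ a ∈ C \ D, f {a} ≤ f C := by
  obtain ⟨D, hDC, ⟨hD, hDle⟩, hDmin⟩ := exists_minimal_le_of_wellFoundedLT
    (fun D => IsFlat M f D ∧ f D + ∑ a ∈ C \ D, f {a} ≤ f C) C ⟨hC, by simp⟩
  refine ⟨D, hDC, ⟨hD, fun i hi => ?_⟩, hDle⟩
  by_contra! hcoloop
  have hpos : 0 < f {i} :=
    (hf.2.1 _ (Finset.singleton_subset_iff.mpr (hD.1 hi))).lt_of_ne' hcoloop.1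
  have hsplit : C \ (D \ {i}) = insert i (C \ D) := by
    rw [Finset.sdiff_sdiff_eq_sdiff_union (Finset.singleton_subset_iff.mpr (hDC hi)),
      Finset.union_singleton]
  have hsmaller : IsFlat M f (D \ {i}) ∧ f (D \ {i}) + ∑ a ∈ C \ (D \ {i}), f {a} ≤ f C := by
    refine ⟨hf.isFlat_sdiff_singleton hD hi hpos (by linarith [hcoloop.2]), ?_⟩
    rw [hsplit, Finset.sum_insert (fun h => (Finset.mem_sdiff.mp h).2 hi)]
    linarith [hcoloop.2]
  exact (Finset.notMem_sdiff_of_mem_right (Finset.mem_singleton_self i))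
    (hDmin hsmaller Finset.sdiff_subset hi)

end IsPolymatroid

section Convolution

variable {α : Type*} {M N : Finset α} {f : Finset α → ℝ} {μ : Finset α → ℝ}

lemma measure_eq_sum_rank_singleton (hMN : M ⊆ N)
    (hμadd : ∀ A, A ⊆ N → μ A = ∑ a ∈ A, μ {a}) (h5 : ∀ a ∈ M, μ {a} = f {a})
    {A : Finset α} (hA : A ⊆ M) : μ A = ∑ a ∈ A, f {a} := by
  rw [hμadd A (hA.trans hMN)]
  exact Finset.sum_congr rfl fun a ha => h5 a (hA ha)

variable [DecidableEq α] {L : Finset (Finset α)} {r : Finset α → ℝ}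

lemma le_rank_add_measure_sdiff (hMN : M ⊆ N) (hf : IsPolymatroid M f)
    (hμadd : ∀ A, A ⊆ N → μ A = ∑ a ∈ A, μ {a})
    (h1 : ∀ Z ∈ L, Z ∩ M ∈ L)
    (h3 : ∀ Z₁ ∈ L, ∀ Z₂ ∈ L, Z₁ ⊂ Z₂ → r Z₁ ≤ r Z₂)
    (h4 : ∀ Z ∈ L, Z ⊆ M → r Z = f Z)
    (h5 : ∀ a ∈ M, μ {a} = f {a})
    {A : Finset α} (hA : A ⊆ M) {Z : Finset α} (hZ : Z ∈ L) :
    f A ≤ r Z + μ (A \ Z) := by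
  have hZM : r (Z ∩ M) ≤ r Z := by
    rcases (Finset.inter_subset_left : Z ∩ M ⊆ Z).eq_or_ssubset with heq | hss
    · rw [heq]
    · exact h3 _ (h1 Z hZ) _ hZ hss
  have hAZ : f (A ∩ Z) ≤ f (Z ∩ M) := hf.2.2.1 _ _
    (Finset.subset_inter Finset.inter_subset_right (Finset.inter_subset_left.trans hA))
    Finset.inter_subset_right
  rw [measure_eq_sum_rank_singleton hMN hμadd h5 (Finset.sdiff_subset.trans hA)]
  linarith [hf.le_inter_add_sum_sdiff hA Z, h4 _ (h1 Z hZ) Finset.inter_subset_right]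

lemma exists_rank_add_measure_sdiff_le (hMN : M ⊆ N) (hf : IsPolymatroid M f)
    (hμadd : ∀ A, A ⊆ N → μ A = ∑ a ∈ A, μ {a})
    (h2 : ∀ C, IsCyclicFlat M f C → C ∈ L)
    (h4 : ∀ Z ∈ L, Z ⊆ M → r Z = f Z)
    (h5 : ∀ a ∈ M, μ {a} = f {a})
    {A : Finset α} (hA : A ⊆ M) :
    ∃ Z ∈ L, r Z + μ (A \ Z) ≤ f A := by
  obtain ⟨C, hAC, hC, hfC⟩ := hf.exists_isFlat_superset hA
  obtain ⟨D, hDC, hD, hDle⟩ := hf.exists_isCyclicFlat_subset hC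
  have hsum : ∑ a ∈ A \ D, f {a} ≤ ∑ a ∈ C \ D, f {a} :=
    Finset.sum_le_sum_of_subset_of_nonneg (Finset.sdiff_subset_sdiff hAC le_rfl)
      fun a ha _ => hf.2.1 _ (Finset.singleton_subset_iff.mpr (hC.1 (Finset.mem_sdiff.mp ha).1))
  refine ⟨D, h2 D hD, ?_⟩
  rw [h4 D (h2 D hD) hD.1.1, measure_eq_sum_rank_singleton hMN hμadd h5
    (Finset.sdiff_subset.trans hA)]
  linarith

end Convolution

theorem statement_7_general {α : Type*} [DecidableEq α]
    (M N : Finset α) (hMN : M ⊆ N)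
    (f : Finset α → ℝ) (hf : IsPolymatroid M f)
    (L : Finset (Finset α)) (hLne : L.Nonempty)
    (r : Finset α → ℝ)
    (μ : Finset α → ℝ)
    (hμadd : ∀ A, A ⊆ N → μ A = ∑ a ∈ A, μ {a})
    (h1 : ∀ Z ∈ L, Z ∩ M ∈ L)
    (h2 : ∀ C, IsCyclicFlat M f C → C ∈ L)
    (h3 : ∀ Z₁ ∈ L, ∀ Z₂ ∈ L, Z₁ ⊂ Z₂ → r Z₁ ≤ r Z₂)
    (h4 : ∀ Z ∈ L, Z ⊆ M → r Z = f Z)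
    (h5 : ∀ a ∈ M, μ {a} = f {a})
    (r' : Finset α → ℝ)
    (hr' : ∀ A, r' A = L.inf' hLne (fun Z => r Z + μ (A \ Z))) :
    ∀ A, A ⊆ M → r' A = f A := by
  intro A hA
  rw [hr' A]
  obtain ⟨D, hD, hDle⟩ := exists_rank_add_measure_sdiff_le hMN hf hμadd h2 h4 h5 hA
  exact le_antisymm ((Finset.inf'_le _ hD).trans hDle) <|
    Finset.le_inf' _ _ fun Z hZ => le_rank_add_measure_sdiff hMN hf hμadd h1 h3 h4 h5 hA hZ

/-- Let `(f, M)` be a polymatroid, `N ⊇ M`, `(r, L)` a ranked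
lattice on subsets of `N`, and `μ` a measure on `N`.  If (1) `Z ∩ M ∈ L` for all
`Z ∈ L`, (2) every cyclic flat of `(f, M)` is in `L`, (3) `r` is monotone on `L`,
(4) `r Z = f Z` for every `Z ∈ L` with `Z ⊆ M`, and (5) `μ {a} = f {a}` for all
`a ∈ M`, then the convolution `r' = r * μ` satisfies `r' A = f A` for all `A ⊆ M`. -/
theorem statement_7 {α : Type*} [DecidableEq α]
    (M N : Finset α) (hMN : M ⊆ N)
    (f : Finset α → ℝ) (hf : IsPolymatroid M f)
    (L : Finset (Finset α)) (hLne : L.Nonempty) (hLsub : ∀ Z ∈ L, Z ⊆ N)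
    (meet join : Finset α → Finset α → Finset α)
    (hmeet : ∀ Z₁ ∈ L, ∀ Z₂ ∈ L, meet Z₁ Z₂ ∈ L ∧ meet Z₁ Z₂ ⊆ Z₁ ∧ meet Z₁ Z₂ ⊆ Z₂ ∧
      ∀ W ∈ L, W ⊆ Z₁ → W ⊆ Z₂ → W ⊆ meet Z₁ Z₂)
    (hjoin : ∀ Z₁ ∈ L, ∀ Z₂ ∈ L, join Z₁ Z₂ ∈ L ∧ Z₁ ⊆ join Z₁ Z₂ ∧ Z₂ ⊆ join Z₁ Z₂ ∧
      ∀ W ∈ L, Z₁ ⊆ W → Z₂ ⊆ W → join Z₁ Z₂ ⊆ W)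
    (r : Finset α → ℝ) (hr : ∀ Z ∈ L, 0 ≤ r Z)
    (μ : Finset α → ℝ)
    (hμnn : ∀ A, A ⊆ N → 0 ≤ μ A)
    (hμadd : ∀ A, A ⊆ N → μ A = ∑ a ∈ A, μ {a})
    (h1 : ∀ Z ∈ L, Z ∩ M ∈ L)
    (h2 : ∀ C, IsCyclicFlat M f C → C ∈ L)
    (h3 : ∀ Z₁ ∈ L, ∀ Z₂ ∈ L, Z₁ ⊂ Z₂ → r Z₁ ≤ r Z₂)
    (h4 : ∀ Z ∈ L, Z ⊆ M → r Z = f Z)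
    (h5 : ∀ a ∈ M, μ {a} = f {a})
    (r' : Finset α → ℝ)
    (hr' : ∀ A, r' A = L.inf' hLne (fun Z => r Z + μ (A \ Z))) :
    ∀ A, A ⊆ M → r' A = f A :=
  statement_7_general M N hMN f hf L hLne r μ hμadd h1 h2 h3 h4 h5 r' hr'
end

section
/- Let (f,M) be a polymatroid, X a proper subset of M, and (f',M−X) the contract of (f,M) along X, i.e., f'(A)=f(A∪X)−f(X) for A⊆M−X. Let (g',N') be any extension of (f',M−X) with N'∩X=∅. Then there is an extension (g,N) of (f,M) with N=N'∪X such that (g',N') is the contract of (g,N) along X, i.e., g'(A)=g(A∪X)−g(X) for all A⊆N'. -/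
open scoped Classical

/-! The extension is the pointwise minimum of two candidates: `g (A \ X) + f X`, the value forced
on sets containing `X` by the contract, and `f (A ∩ M) + g (A \ M)`, the free sum of `f` and the
new part of `g`. The only nontrivial point is submodularity of the minimum, which needs the mixed
inequality `contractLift_cross`; it follows by comparing marginal gains of `g` with those of `f`
through the contract, where the two agree. -/

section Polymatroid

variable {α : Type*} [DecidableEq α] {N : Finset α} {p : Finset α → ℝ}

lemma IsPolymatroid.diminishing_returns (hp : IsPolymatroid N p) {S T C : Finset α}
    (hS : S ⊆ N) (hT : T ⊆ N) (hCS : C ⊆ S) :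
    p (S ∪ T) + p C ≤ p S + p (C ∪ T) := by
  obtain ⟨-, -, hmono, hsub⟩ := hp
  have hCT : C ∪ T ⊆ N := Finset.union_subset (hCS.trans hS) hT
  have hunion : S ∪ (C ∪ T) = S ∪ T := by grind
  have hinter : C ⊆ S ∩ (C ∪ T) := by grind
  have := hsub S (C ∪ T) hS hCT
  have := hmono _ _ hinter (Finset.inter_subset_left.trans hS)
  rw [hunion] at *
  linarith

lemma IsPolymatroid.subadditive (hp : IsPolymatroid N p) {A B : Finset α}
    (hA : A ⊆ N) (hB : B ⊆ N) : p (A ∪ B) ≤ p A + p B := by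
  obtain ⟨-, hnonneg, -, hsub⟩ := hp
  linarith [hsub A B hA hB, hnonneg (A ∩ B) (Finset.inter_subset_left.trans hA)]

lemma IsPolymatroid.submodular_inter (hp : IsPolymatroid N p) (A B : Finset α) :
    p ((A ∪ B) ∩ N) + p (A ∩ B ∩ N) ≤ p (A ∩ N) + p (B ∩ N) := by
  rw [Finset.union_inter_distrib_right, Finset.inter_inter_distrib_right]
  exact hp.2.2.2 _ _ Finset.inter_subset_right Finset.inter_subset_right

lemma IsPolymatroid.submodular_sdiff (hp : IsPolymatroid N p) {A B S : Finset α}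
    (hA : A \ S ⊆ N) (hB : B \ S ⊆ N) :
    p ((A ∪ B) \ S) + p ((A ∩ B) \ S) ≤ p (A \ S) + p (B \ S) := by
  have hinter : (A ∩ B) \ S = A \ S ∩ (B \ S) := by grind
  rw [Finset.union_sdiff_distrib, hinter]
  exact hp.2.2.2 _ _ hA hB

end Polymatroid

lemma min_add_min_le_min_add_min {vu vi va vb wu wi wa wb : ℝ}
    (hv : vu + vi ≤ va + vb) (hw : wu + wi ≤ wa + wb)
    (hvw : vu + wi ≤ va + wb) (hwv : vu + wi ≤ wa + vb) :
    min vu wu + min vi wi ≤ min va wa + min vb wb := by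
  have := min_le_left vu wu
  have := min_le_right vu wu
  have := min_le_left vi wi
  have := min_le_right vi wi
  rcases min_choice va wa with ha | ha <;> rcases min_choice vb wb with hb | hb <;>
    rw [ha, hb] <;> linarith

section ContractLift

variable {α : Type*} [DecidableEq α]

def contract (f : Finset α → ℝ) (X : Finset α) (A : Finset α) : ℝ :=
  f (A ∪ X) - f X

def contractLift (M X : Finset α) (f g : Finset α → ℝ) (A : Finset α) : ℝ :=
  min (g (A \ X) + f X) (f (A ∩ M) + g (A \ M))

variable {M X N : Finset α} {f g : Finset α → ℝ}
  (hf : IsPolymatroid M f) (hg : IsExtension (M \ X) (contract f X) N g) (hXM : X ⊆ M)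
include hf hg hXM

lemma contractLift_cross {A B : Finset α} (hA : A ⊆ N ∪ X) (hB : B ⊆ N ∪ X) :
    g ((A ∪ B) \ X) + (f (A ∩ B ∩ M) + g ((A ∩ B) \ M)) ≤
      g (A \ X) + (f (B ∩ M) + g (B \ M)) := by
  have hMN : M \ X ⊆ N := hg.1
  have hAX : A \ X ⊆ N := by grind
  have hBM : B \ M ⊆ N := by grind
  have hT : (B ∩ M) \ X ⊆ M \ X := by grind
  have hC : (A ∩ B ∩ M) \ X ⊆ M \ X := by grind
  have hunion : (A ∪ B) \ X = (A \ X ∪ B \ M) ∪ (B ∩ M) \ X := by grind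
  set S := A \ X ∪ B \ M
  set T := (B ∩ M) \ X
  set C := (A ∩ B ∩ M) \ X
  have g_marginal : g (S ∪ T) + g C ≤ g S + g (C ∪ T) :=
    hg.2.1.diminishing_returns (Finset.union_subset hAX hBM) (hT.trans hMN) (by grind)
  have g_split : g S + g ((A ∩ B) \ M) ≤ g (A \ X) + g (B \ M) := by
    have := hg.2.1.2.2.2 _ _ hAX hBM
    have := hg.2.1.2.2.1 ((A ∩ B) \ M) (A \ X ∩ (B \ M)) (by grind)
      (Finset.inter_subset_left.trans hAX)
    linarith
  have f_marginal : f (C ∪ X ∪ T) + f (A ∩ B ∩ M) ≤ f (C ∪ X) + f (B ∩ M) := by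
    have := hf.diminishing_returns (S := C ∪ X) (T := T) (C := A ∩ B ∩ M) (by grind) (by grind)
      (by grind)
    have := hf.2.2.1 (A ∩ B ∩ M ∪ T) (B ∩ M) (by grind) Finset.inter_subset_right
    linarith
  rw [hg.2.2 _ (Finset.union_subset hC hT), hg.2.2 _ hC, contract, contract,
    Finset.union_right_comm C T X] at g_marginal
  rw [hunion]
  linarith

lemma contractLift_eq_of_subset {A : Finset α} (hA : A ⊆ M) : contractLift M X f g A = f A := by
  obtain ⟨-, ⟨hg0, -⟩, hgcon⟩ := hg
  have hforced : g (A \ X) + f X = f (A ∪ X) := by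
    rw [hgcon _ (Finset.sdiff_subset_sdiff hA le_rfl), contract,
      Finset.sdiff_union_self_eq_union]
    ring
  rw [contractLift, hforced, Finset.inter_eq_left.mpr hA, Finset.sdiff_eq_empty_iff_subset.mpr hA,
    hg0, add_zero]
  exact min_eq_right (hf.2.2.1 _ _ Finset.subset_union_left (Finset.union_subset hA hXM))

lemma isPolymatroid_contractLift : IsPolymatroid (N ∪ X) (contractLift M X f g) := by
  obtain ⟨hf0, hfnn, hfmono, -⟩ := id hf
  obtain ⟨hMN, hgp, -⟩ := id hg
  obtain ⟨-, hgnn, hgmono, -⟩ := id hgp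
  have hX : ∀ {A}, A ⊆ N ∪ X → A \ X ⊆ N := fun hA => by grind
  have hM : ∀ {A}, A ⊆ N ∪ X → A \ M ⊆ N := fun hA => by grind
  refine ⟨?_, fun A hA => ?_, fun A B hAB hB => ?_, fun A B hA hB => ?_⟩
  · rw [contractLift_eq_of_subset hf hg hXM (Finset.empty_subset M), hf0]
  · exact le_min (add_nonneg (hgnn _ (hX hA)) (hfnn X hXM))
      (add_nonneg (hfnn _ Finset.inter_subset_right) (hgnn _ (hM hA)))
  · exact min_le_min
      (add_le_add_left (hgmono _ _ (Finset.sdiff_subset_sdiff hAB le_rfl) (hX hB)) _)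
      (add_le_add (hfmono _ _ (Finset.inter_subset_inter hAB le_rfl) Finset.inter_subset_right)
        (hgmono _ _ (Finset.sdiff_subset_sdiff hAB le_rfl) (hM hB)))
  · have hBA := contractLift_cross hf hg hXM hB hA
    rw [Finset.union_comm B, Finset.inter_comm B] at hBA
    apply min_add_min_le_min_add_min
    · linarith [hgp.submodular_sdiff (hX hA) (hX hB)]
    · linarith [hf.submodular_inter A B, hgp.submodular_sdiff (hM hA) (hM hB)]
    · linarith [contractLift_cross hf hg hXM hA hB]
    · linarith

lemma contractLift_contract {A : Finset α} (hA : A ⊆ N) (hAX : Disjoint A X) :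
    contract (contractLift M X f g) X A = g A := by
  have hAX' := Finset.disjoint_left.1 hAX
  have hAM : A ∩ M ⊆ M \ X := by grind
  have hunion : (A ∪ X) ∩ M = A ∩ M ∪ X := by grind
  have hsdiff : (A ∪ X) \ M = A \ M := by grind
  have hlift : contractLift M X f g (A ∪ X) = min (g A + f X) (g (A ∩ M) + f X + g (A \ M)) := by
    rw [contractLift, Finset.union_sdiff_cancel_right hAX, hunion, hsdiff, hg.2.2 _ hAM, contract]
    ring_nf
  have hsplit : g A ≤ g (A ∩ M) + g (A \ M) := by
    have := hg.2.1.subadditive (A := A ∩ M) (B := A \ M) (Finset.inter_subset_left.trans hA)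
      (Finset.sdiff_subset.trans hA)
    rwa [Finset.union_comm, Finset.sdiff_union_inter] at this
  rw [contract, hlift, contractLift_eq_of_subset hf hg hXM hXM, min_eq_left (by linarith)]
  ring

end ContractLift

/-- An extension of a contract is a contract of an extension.
Let `X ⊊ M`, let `(f', M \ X)` be the contract of `(f, M)` along `X`
(`f' A = f (A ∪ X) - f X`), and let `(g', N')` be any extension of `(f', M \ X)`
with `N'` disjoint from `X`.  Then on `N = N' ∪ X` there is an extension `(g, N)`
of `(f, M)` such that `(g', N')` is the contract of `(g, N)` along `X`:
`g' A = g (A ∪ X) - g X` for all `A ⊆ N'`. -/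
theorem statement_11 {α : Type*} [DecidableEq α]
    (M : Finset α) (f : Finset α → ℝ) (hf : IsPolymatroid M f)
    (X : Finset α) (hX : X ⊂ M)
    (f' : Finset α → ℝ)
    (hf'con : ∀ A, A ⊆ M \ X → f' A = f (A ∪ X) - f X)
    (N' : Finset α) (g' : Finset α → ℝ)
    (hg' : IsExtension (M \ X) f' N' g')
    (hdisj : Disjoint N' X) :
    ∃ g : Finset α → ℝ,
      IsExtension M f (N' ∪ X) g ∧
      ∀ A, A ⊆ N' → g' A = g (A ∪ X) - g X := by
  obtain ⟨hMN, hgp, hgf'⟩ := hg'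
  have hXM : X ⊆ M := hX.subset
  have hg : IsExtension (M \ X) (contract f X) N' g' :=
    ⟨hMN, hgp, fun A hA => (hgf' A hA).trans (hf'con A hA)⟩
  refine ⟨contractLift M X f g', ⟨?_, isPolymatroid_contractLift hf hg hXM,
    fun A hA => contractLift_eq_of_subset hf hg hXM hA⟩, fun A hA => ?_⟩
  · grind
  · exact (contractLift_contract hf hg hXM hA (hdisj.mono_left hA)).symm
end

section
/- Every contract of a sticky polymatroid is sticky: if (f,M) is a sticky polymatroid and X⊆M, then the contract (f',M−X), defined by f'(A)=f(A∪X)−f(X) for A⊆M−X, is sticky. -/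
open scoped Classical

/-!
Relabelling by a permutation that fixes the ground set preserves extensions and amalgams, so
we may assume the new elements of the two extensions of the contract `f / X` avoid `X`.
An extension `(g, N)` of `f / X` with `N ∩ X = ∅` lifts to the extension of `f` on `N ∪ X`
that equals `f` on subsets of `M` and `A ↦ g (A ∩ N) + f X` elsewhere; its contraction by `X`
is `g` again. Stickiness of `f` amalgamates the two lifts, and contracting the amalgam by `X`
amalgamates the two given extensions.
-/

open Finset

section
variable {α : Type*} [DecidableEq α]

theorem IsPolymatroid.image_perm {N : Finset α} {g : Finset α → ℝ} (hg : IsPolymatroid N g)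
    (σ : Equiv.Perm α) : IsPolymatroid (N.image σ) (fun B => g (B.image σ.symm)) := by
  obtain ⟨hg0, hgnn, hgmono, hgsub⟩ := hg
  have hback : ∀ B, B ⊆ N.image σ → B.image σ.symm ⊆ N := fun B hB => by
    simpa [image_image] using image_subset_image (f := σ.symm) hB
  refine ⟨by simpa using hg0, fun B hB => hgnn _ (hback B hB),
    fun A B hAB hB => hgmono _ _ (image_subset_image hAB) (hback B hB), fun A B hA hB => ?_⟩
  simpa [image_union, image_inter _ _ σ.symm.injective] using
    hgsub _ _ (hback A hA) (hback B hB)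

theorem IsPolymatroid.comp_inter {N : Finset α} {g : Finset α → ℝ} (hg : IsPolymatroid N g)
    (E : Finset α) : IsPolymatroid E (fun A => g (A ∩ N)) := by
  obtain ⟨hg0, hgnn, hgmono, hgsub⟩ := hg
  refine ⟨by simpa using hg0, fun A _ => hgnn _ inter_subset_right,
    fun A B hAB _ => hgmono _ _ (inter_subset_inter_right hAB) inter_subset_right,
    fun A B _ _ => ?_⟩
  have := hgsub _ _ (inter_subset_right (s₁ := A)) (inter_subset_right (s₁ := B))
  rwa [← union_inter_distrib_right, ← inter_inter_distrib_right] at this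

theorem IsPolymatroid.contract {E D X : Finset α} {h : Finset α → ℝ} (hh : IsPolymatroid E h)
    (hX : X ⊆ E) (hD : D ⊆ E) : IsPolymatroid D (fun A => h (A ∪ X) - h X) := by
  obtain ⟨-, -, hmono, hsub⟩ := hh
  have hE : ∀ A, A ⊆ D → A ∪ X ⊆ E := fun A hA => union_subset (hA.trans hD) hX
  refine ⟨by simp, fun A hA => sub_nonneg.2 (hmono _ _ subset_union_right (hE A hA)),
    fun A B hAB hB => sub_le_sub_right (hmono _ _ (union_subset_union_left hAB) (hE B hB)) _,
    fun A B hA hB => ?_⟩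
  have := hsub _ _ (hE A hA) (hE B hB)
  rw [← union_union_distrib_right, ← inter_union_distrib_right] at this
  linarith

theorem IsPolymatroid.add_union_le_add_union {M B C X : Finset α} {f : Finset α → ℝ}
    (hf : IsPolymatroid M f) (hCB : C ⊆ B) (hB : B ⊆ M) (hX : X ⊆ M) :
    f C + f (B ∪ X) ≤ f B + f (C ∪ X) := by
  obtain ⟨-, -, hmono, hsub⟩ := hf
  have hunion : B ∪ (C ∪ X) = B ∪ X := by
    rw [← union_assoc, union_eq_left.2 hCB]
  have hC : C ⊆ B ∩ (C ∪ X) := subset_inter hCB subset_union_left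
  have := hsub B (C ∪ X) hB (union_subset (hCB.trans hB) hX)
  have := hmono _ _ hC (inter_subset_left.trans hB)
  rw [hunion] at *
  linarith

theorem IsPolymatroid.piecewise {M E : Finset α} {f F : Finset α → ℝ}
    (hf : IsPolymatroid M f)
    (hFmono : ∀ A B, A ⊆ B → B ⊆ E → F A ≤ F B)
    (hFsub : ∀ A B, A ⊆ E → B ⊆ E → F (A ∪ B) + F (A ∩ B) ≤ F A + F B)
    (hle : ∀ A, A ⊆ M → f A ≤ F A)
    (hmix : ∀ A B, A ⊆ E → B ⊆ M → F (A ∪ B) + f (A ∩ B) ≤ F A + f B) :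
    IsPolymatroid E (fun A => if A ⊆ M then f A else F A) := by
  obtain ⟨hf0, hfnn, hfmono, hfsub⟩ := hf
  have hleF : ∀ A, (if A ⊆ M then f A else F A) ≤ F A := fun A => by
    split_ifs with hA
    exacts [hle A hA, le_rfl]
  refine ⟨by simp [hf0], fun A hA => ?_, fun A B hAB hB => ?_, fun A B hA hB => ?_⟩
  · dsimp only
    split_ifs with hAM
    · exact hfnn A hAM
    · calc 0 = f ∅ := hf0.symm
        _ ≤ F ∅ := hle ∅ (empty_subset M)
        _ ≤ F A := hFmono ∅ A (empty_subset A) hA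
  · dsimp only
    by_cases hBM : B ⊆ M
    · simp only [hBM, hAB.trans hBM, if_true]
      exact hfmono A B hAB hBM
    · simp only [hBM, if_false]
      exact (hleF A).trans (hFmono A B hAB hB)
  · dsimp only
    by_cases hAM : A ⊆ M <;> by_cases hBM : B ⊆ M
    · simp only [hAM, hBM, union_subset hAM hBM, inter_subset_left.trans hAM, if_true]
      exact hfsub A B hAM hBM
    · have hAB : ¬ A ∪ B ⊆ M := fun h => hBM (subset_union_right.trans h)
      simp only [hAM, hBM, hAB, inter_subset_left.trans hAM, if_true, if_false]
      have := hmix B A hB hAM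
      rw [union_comm, inter_comm] at this
      linarith
    · have hAB : ¬ A ∪ B ⊆ M := fun h => hAM (subset_union_left.trans h)
      simp only [hAM, hBM, hAB, inter_subset_right.trans hBM, if_true, if_false]
      exact hmix A B hA hBM
    · have hAB : ¬ A ∪ B ⊆ M := fun h => hAM (subset_union_left.trans h)
      simp only [hAM, hBM, hAB, if_false]
      linarith [hleF (A ∩ B), hFsub A B hA hB]

theorem IsPolymatroid.exists_extension_of_contract {M X N : Finset α} {f g : Finset α → ℝ}
    (hf : IsPolymatroid M f) (hX : X ⊆ M) (hMN : M \ X ⊆ N) (hNX : Disjoint N X)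
    (hg : IsPolymatroid N g) (hgf : ∀ A, A ⊆ M \ X → g A = f (A ∪ X) - f X) :
    ∃ g', IsExtension M f (N ∪ X) g' ∧ ∀ A, A ⊆ N → g' (A ∪ X) = g A + f X := by
  have hinter : ∀ A, A ⊆ M → A ∩ N = A \ X := fun A hA => by
    ext a
    simp only [mem_inter, mem_sdiff]
    exact ⟨fun h => ⟨h.1, disjoint_left.1 hNX h.2⟩,
      fun h => ⟨h.1, hMN (mem_sdiff.2 ⟨hA h.1, h.2⟩)⟩⟩
  have hcontract : ∀ A, A ⊆ M → f (A ∪ X) = g (A ∩ N) + f X := fun A hA => by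
    rw [hinter A hA, hgf _ (sdiff_subset_sdiff hA le_rfl), sdiff_union_self_eq_union]
    ring
  have hgE := hg.comp_inter (N ∪ X)
  have hMNX : M ⊆ N ∪ X := fun a ha => by
    by_cases haX : a ∈ X
    exacts [mem_union_right _ haX, mem_union_left _ (hMN (mem_sdiff.2 ⟨ha, haX⟩))]
  refine ⟨fun A => if A ⊆ M then f A else g (A ∩ N) + f X, ⟨hMNX, ?_, fun A hA => if_pos hA⟩,
    fun A hA => ?_⟩
  · refine hf.piecewise (fun A B hAB hB => by linarith [hgE.2.2.1 A B hAB hB])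
      (fun A B hA hB => by linarith [hgE.2.2.2 A B hA hB]) (fun A hA => ?_)
      (fun A B hA hB => ?_)
    · rw [← hcontract A hA]
      exact hf.2.2.1 _ _ subset_union_left (union_subset hA hX)
    · have hfB := hf.add_union_le_add_union (inter_subset_right (s₁ := A)) hB hX
      rw [hcontract B hB, hcontract _ (inter_subset_right.trans hB)] at hfB
      linarith [hgE.2.2.2 A B hA (hB.trans hMNX)]
  · have hAXN : (A ∪ X) ∩ N = A := by
      rw [union_inter_distrib_right, inter_eq_left.2 hA, disjoint_iff_inter_eq_empty.1 hNX.symm,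
        union_empty]
    dsimp only
    split_ifs with hAX
    · rw [hcontract _ (union_subset_left hAX), inter_eq_left.2 hA]
    · rw [hAXN]

theorem Finset.exists_perm_image_disjoint [Infinite α] (S V : Finset α) :
    ∃ σ : Equiv.Perm α, (∀ a ∈ S, σ a ∉ V) ∧ ∀ a ∈ V, a ∉ S → σ a = a := by
  induction S using Finset.induction_on generalizing V with
  | empty => exact ⟨1, by simp, by simp⟩
  | insert s S hs ih =>
    obtain ⟨σ, hσS, hσV⟩ := ih (insert s V)
    obtain ⟨t, ht⟩ := Infinite.exists_notMem_finset (V ∪ S.image σ)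
    rw [mem_union, not_or] at ht
    have hσs : σ s = s := hσV s (mem_insert_self s V) hs
    refine ⟨σ.trans (Equiv.swap s t), fun a ha => ?_, fun a ha haS => ?_⟩
    · rcases mem_insert.1 ha with rfl | ha
      · simpa [hσs] using ht.1
      · have h := hσS a ha
        rw [mem_insert, not_or] at h
        rw [Equiv.trans_apply, Equiv.swap_apply_of_ne_of_ne h.1
          fun h' => ht.2 (by rw [← h']; exact mem_image_of_mem σ ha)]
        exact h.2
    · rw [mem_insert, not_or] at haS
      rw [Equiv.trans_apply, hσV a (mem_insert_of_mem ha) haS.2,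
        Equiv.swap_apply_of_ne_of_ne haS.1 (by rintro rfl; exact ht.1 ha)]

theorem Finset.image_eq_self_of_forall_apply_eq {f : α → α} {s : Finset α}
    (h : ∀ a ∈ s, f a = a) : s.image f = s := by
  rw [image_congr (g := id) h, image_id]

theorem IsExtension.image_perm {M N : Finset α} {f g : Finset α → ℝ} (e : IsExtension M f N g)
    {σ : Equiv.Perm α} (hσ : ∀ a ∈ M, σ a = a) :
    IsExtension M f (N.image σ) (fun B => g (B.image σ.symm)) := by
  refine ⟨fun a ha => hσ a ha ▸ mem_image_of_mem σ (e.1 ha), e.2.1.image_perm σ, fun A hA => ?_⟩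
  have hσA : A.image σ.symm = A :=
    image_eq_self_of_forall_apply_eq fun a ha => σ.symm_apply_eq.2 (hσ a (hA ha)).symm
  simpa only [hσA] using e.2.2 A hA

theorem Sticky.of_forall_disjoint [Infinite α] {M : Finset α} {f : Finset α → ℝ} (V : Finset α)
    (hV : ∀ N₁ g₁ N₂ g₂, IsExtension M f N₁ g₁ → IsExtension M f N₂ g₂ → N₁ ∩ N₂ = M →
      Disjoint (N₁ \ M) V → Disjoint (N₂ \ M) V → ∃ h, IsAmalgam N₁ g₁ N₂ g₂ h) :
    Sticky M f := by
  intro N₁ g₁ N₂ g₂ e₁ e₂ hN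
  obtain ⟨σ, hσS, hσV⟩ := ((N₁ ∪ N₂) \ M).exists_perm_image_disjoint (V ∪ (N₁ ∪ N₂))
  have hσM : ∀ a ∈ M, σ a = a := fun a ha =>
    hσV a (mem_union_right _ (mem_union_left _ (e₁.1 ha))) fun h => (mem_sdiff.1 h).2 ha
  have hdisj : ∀ N, N ⊆ N₁ ∪ N₂ → Disjoint (N.image σ \ M) V := fun N hN => by
    refine disjoint_left.2 fun b hb hbV => ?_
    obtain ⟨hb, hbM⟩ := mem_sdiff.1 hb
    obtain ⟨a, ha, rfl⟩ := mem_image.1 hb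
    have haM : a ∉ M := fun haM => hbM (by rwa [hσM a haM])
    exact hσS a (mem_sdiff.2 ⟨hN ha, haM⟩) (mem_union_left _ hbV)
  have hN' : N₁.image σ ∩ N₂.image σ = M := by
    rw [← image_inter _ _ σ.injective, hN, image_eq_self_of_forall_apply_eq hσM]
  obtain ⟨h, hh, hh₁, hh₂⟩ := hV _ _ _ _ (e₁.image_perm hσM) (e₂.image_perm hσM) hN'
    (hdisj N₁ subset_union_left) (hdisj N₂ subset_union_right)
  refine ⟨fun A => h (A.image σ), ?_, fun A hA => ?_, fun A hA => ?_⟩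
  · simpa [image_union, image_image] using hh.image_perm σ.symm
  · simpa [image_image] using hh₁ _ (image_subset_image hA)
  · simpa [image_image] using hh₂ _ (image_subset_image hA)

theorem Sticky.exists_amalgam_of_contract {M X : Finset α} {f f' : Finset α → ℝ}
    (hsticky : Sticky M f) (hf : IsPolymatroid M f) (hX : X ⊆ M)
    (hf' : ∀ A, A ⊆ M \ X → f' A = f (A ∪ X) - f X)
    {N₁ N₂ : Finset α} {g₁ g₂ : Finset α → ℝ}
    (e₁ : IsExtension (M \ X) f' N₁ g₁) (e₂ : IsExtension (M \ X) f' N₂ g₂)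
    (hN : N₁ ∩ N₂ = M \ X) (hN₁X : Disjoint N₁ X) (hN₂X : Disjoint N₂ X) :
    ∃ h, IsAmalgam N₁ g₁ N₂ g₂ h := by
  obtain ⟨g₁', e₁', hg₁'⟩ := hf.exists_extension_of_contract hX e₁.1 hN₁X e₁.2.1
    fun A hA => (e₁.2.2 A hA).trans (hf' A hA)
  obtain ⟨g₂', e₂', hg₂'⟩ := hf.exists_extension_of_contract hX e₂.1 hN₂X e₂.2.1
    fun A hA => (e₂.2.2 A hA).trans (hf' A hA)
  have hinter : (N₁ ∪ X) ∩ (N₂ ∪ X) = M := by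
    rw [← inter_union_distrib_right, hN, sdiff_union_of_subset hX]
  obtain ⟨h, hh, hh₁, hh₂⟩ := hsticky _ _ _ _ e₁' e₂' hinter
  have hhX : h X = f X := (hh₁ X subset_union_right).trans (e₁'.2.2 X hX)
  refine ⟨fun A => h (A ∪ X) - h X,
    hh.contract (subset_union_right.trans subset_union_left) (union_subset_union
      subset_union_left subset_union_left), fun A hA => ?_, fun A hA => ?_⟩
  · show h (A ∪ X) - h X = g₁ A
    rw [hh₁ _ (union_subset_union_left hA), hg₁' A hA, hhX]
    ring
  · show h (A ∪ X) - h X = g₂ A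
    rw [hh₂ _ (union_subset_union_left hA), hg₂' A hA, hhX]
    ring

end

/-- Every contract of a sticky polymatroid is sticky: if `(f, M)`
is sticky and `X ⊆ M`, then the contract `(f', M \ X)`, given by
`f' A = f (A ∪ X) - f X` for `A ⊆ M \ X`, is sticky. -/
theorem statement_12 {α : Type*} [DecidableEq α] [Infinite α]
    (M : Finset α) (f : Finset α → ℝ) (hf : IsPolymatroid M f)
    (hsticky : Sticky M f)
    (X : Finset α) (hX : X ⊆ M)
    (f' : Finset α → ℝ)
    (hf'con : ∀ A, A ⊆ M \ X → f' A = f (A ∪ X) - f X) :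
    Sticky (M \ X) f' := by
  have hdisj : ∀ N : Finset α, Disjoint (N \ (M \ X)) X → Disjoint N X := fun N hN =>
    disjoint_left.2 fun a ha haX =>
      disjoint_left.1 hN (mem_sdiff.2 ⟨ha, fun h => (mem_sdiff.1 h).2 haX⟩) haX
  exact Sticky.of_forall_disjoint X fun N₁ g₁ N₂ g₂ e₁ e₂ hN h₁ h₂ =>
    hsticky.exists_amalgam_of_contract hf hX hf'con e₁ e₂ hN (hdisj N₁ h₁) (hdisj N₂ h₂)
end

section
/- Let (f,M) be a polymatroid. Then for arbitrary subsets A,B,P,Q,Y of M, Ing(A,B;P,Q) + Comm(A,B;Y) ≥ 0. -/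
open scoped Classical

/-- `f(I,J|K) = f(I∪K) + f(J∪K) - f(K) - f(I∪J∪K)`. -/
def condMI {α : Type*} [DecidableEq α] (f : Finset α → ℝ) (I J K : Finset α) : ℝ :=
  f (I ∪ K) + f (J ∪ K) - f K - f (I ∪ J ∪ K)

/-- `f(Y|A) = f(Y∪A) - f(A)`. -/
def condRk {α : Type*} [DecidableEq α] (f : Finset α → ℝ) (Y A : Finset α) : ℝ :=
  f (Y ∪ A) - f A

/-- The common information expression `Comm(A,B;Y)`. -/
def commExpr {α : Type*} [DecidableEq α] (f : Finset α → ℝ) (A B Y : Finset α) : ℝ :=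
  condMI f A B Y + condRk f Y A + condRk f Y B + condRk f Y (A ∪ B)

/-- The Ingleton expression `Ing(A,B;P,Q)`. -/
def ingExpr {α : Type*} [DecidableEq α] (f : Finset α → ℝ) (A B P Q : Finset α) : ℝ :=
  -(f A + f B - f (A ∪ B)) + condMI f A B P + condMI f A B Q + (f P + f Q - f (P ∪ Q))

/-- The conditional common information expression `Comm(A,B;Y|E)`. -/
def commExprCond {α : Type*} [DecidableEq α] (f : Finset α → ℝ) (A B Y E : Finset α) : ℝ :=
  condMI f A B (Y ∪ E) + condRk f Y (A ∪ E) + condRk f Y (B ∪ E) + condRk f Y (A ∪ B ∪ E)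

/-- The conditional Ingleton expression `Ing(A,B;P,Q|E)`. -/
def ingExprCond {α : Type*} [DecidableEq α] (f : Finset α → ℝ) (A B P Q E : Finset α) : ℝ :=
  -condMI f A B E + condMI f A B (P ∪ E) + condMI f A B (Q ∪ E) + condMI f P Q E


/-! The identity `Comm(A,B;Y) = f(A,B) - f(Y) + 2 f(Y|A) + 2 f(Y|B)` reduces the claim to
`f(Y|E) ≤ f(Y|P ∪ E) + f(Y|Q ∪ E) + f(P,Q|E)`, a single instance of submodularity and
monotonicity. Applied with `(P, Q, ∅)`, `(A, B, P)` and `(A, B, Q)` (and with `f(Y|A ∪ P) ≤ f(Y|A)`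
etc.), the three instances add up to `Ing(A,B;P,Q) + Comm(A,B;Y) ≥ 0`. -/

namespace IsPolymatroid

variable {α : Type*} [DecidableEq α] {M : Finset α} {f : Finset α → ℝ}

theorem mono_s13 (hf : IsPolymatroid M f) {X Z : Finset α} (hXZ : X ⊆ Z) (hZ : Z ⊆ M) :
    f X ≤ f Z :=
  hf.2.2.1 X Z hXZ hZ

theorem union_add_le_of_subset_inter (hf : IsPolymatroid M f) {X Z W : Finset α}
    (hX : X ⊆ M) (hZ : Z ⊆ M) (hW : W ⊆ X ∩ Z) : f (X ∪ Z) + f W ≤ f X + f Z := by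
  have := hf.2.2.2 X Z hX hZ
  have := hf.mono_s13 hW (Finset.inter_subset_left.trans hX)
  linarith

theorem condRk_le_condRk_of_subset (hf : IsPolymatroid M f) {Y A B : Finset α}
    (hAB : A ⊆ B) (hY : Y ⊆ M) (hB : B ⊆ M) : condRk f Y B ≤ condRk f Y A := by
  have := hf.union_add_le_of_subset_inter (X := Y ∪ A) (Z := B) (W := A)
    (Finset.union_subset hY (hAB.trans hB)) hB
    (Finset.subset_inter Finset.subset_union_right hAB)
  rw [Finset.union_assoc, Finset.union_eq_right.2 hAB] at this
  unfold condRk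
  linarith

theorem condRk_le_condRk_union_add_condRk_union_add_condMI (hf : IsPolymatroid M f)
    {Y P Q E : Finset α} (hY : Y ⊆ M) (hP : P ⊆ M) (hQ : Q ⊆ M) (hE : E ⊆ M) :
    condRk f Y E ≤ condRk f Y (P ∪ E) + condRk f Y (Q ∪ E) + condMI f P Q E := by
  have hYPE : Y ∪ (P ∪ E) ⊆ M := by grind
  have hYQE : Y ∪ (Q ∪ E) ⊆ M := by grind
  have hsub := hf.union_add_le_of_subset_inter hYPE hYQE (W := Y ∪ E) (by grind)
  have hmono : f (P ∪ Q ∪ E) ≤ f (Y ∪ (P ∪ E) ∪ (Y ∪ (Q ∪ E))) :=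
    hf.mono_s13 (by grind) (Finset.union_subset hYPE hYQE)
  unfold condRk condMI
  linarith

theorem condRk_le_condRk_add_condRk_add_condMI (hf : IsPolymatroid M f)
    {Y P Q E : Finset α} (hY : Y ⊆ M) (hP : P ⊆ M) (hQ : Q ⊆ M) (hE : E ⊆ M) :
    condRk f Y E ≤ condRk f Y P + condRk f Y Q + condMI f P Q E := by
  have := hf.condRk_le_condRk_union_add_condRk_union_add_condMI hY hP hQ hE
  have := hf.condRk_le_condRk_of_subset Finset.subset_union_left hY (Finset.union_subset hP hE)
  have := hf.condRk_le_condRk_of_subset Finset.subset_union_left hY (Finset.union_subset hQ hE)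
  linarith

theorem le_condRk_add_condRk_add_mutualInfo (hf : IsPolymatroid M f)
    {Y P Q : Finset α} (hY : Y ⊆ M) (hP : P ⊆ M) (hQ : Q ⊆ M) :
    f Y ≤ condRk f Y P + condRk f Y Q + (f P + f Q - f (P ∪ Q)) := by
  have := hf.condRk_le_condRk_union_add_condRk_union_add_condMI hY hP hQ (Finset.empty_subset M)
  simp only [condRk, condMI, Finset.union_empty] at this ⊢
  linarith

end IsPolymatroid

theorem commExpr_eq {α : Type*} [DecidableEq α] (f : Finset α → ℝ) (A B Y : Finset α) :
    commExpr f A B Y =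
      (f A + f B - f (A ∪ B)) - f Y + 2 * condRk f Y A + 2 * condRk f Y B := by
  rw [commExpr, condMI, condRk, condRk, condRk, Finset.union_comm Y A, Finset.union_comm Y B,
    Finset.union_comm Y (A ∪ B)]
  ring

/-- In any polymatroid, for arbitrary subsets `A,B,P,Q,Y` of the
ground set, `Ing(A,B;P,Q) + Comm(A,B;Y) ≥ 0`. -/
theorem statement_13 {α : Type*} [DecidableEq α]
    (M : Finset α) (f : Finset α → ℝ) (hf : IsPolymatroid M f)
    (A B P Q Y : Finset α)
    (hA : A ⊆ M) (hB : B ⊆ M) (hP : P ⊆ M) (hQ : Q ⊆ M) (hY : Y ⊆ M) :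
    0 ≤ ingExpr f A B P Q + commExpr f A B Y := by
  have hYPQ := hf.le_condRk_add_condRk_add_mutualInfo hY hP hQ
  have hYP := hf.condRk_le_condRk_add_condRk_add_condMI hY hA hB hP
  have hYQ := hf.condRk_le_condRk_add_condRk_add_condMI hY hA hB hQ
  rw [ingExpr, commExpr_eq]
  linarith
end

section
/- Let (f,M) be a polymatroid. Then for arbitrary subsets A,B,P,Q,Y,E of M, Ing(A,B;P,Q|E) + Comm(A,B;Y|E) ≥ 0. -/
open scoped Classical

/-!
Identically in `f`, `Ing(A,B;P,Q|E) + Comm(A,B;Y|E)` is a sum of seven conditional mutual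
informations and three conditional ranks; in a polymatroid the former are nonnegative by
submodularity and the latter by monotonicity.
-/

open Finset

namespace IsPolymatroid

variable {α : Type*} [DecidableEq α] {M : Finset α} {f : Finset α → ℝ}

theorem condMI_nonneg (hf : IsPolymatroid M f) {I J K : Finset α}
    (hI : I ⊆ M) (hJ : J ⊆ M) (hK : K ⊆ M) : 0 ≤ condMI f I J K := by
  obtain ⟨-, -, hmono, hsubmod⟩ := hf
  have hsub := hsubmod (I ∪ K) (J ∪ K) (union_subset hI hK) (union_subset hJ hK)
  have hK_le := hmono K ((I ∪ K) ∩ (J ∪ K))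
    (subset_inter subset_union_right subset_union_right)
    (inter_subset_left.trans (union_subset hI hK))
  rw [← union_union_distrib_right] at hsub
  unfold condMI
  linarith

theorem condRk_nonneg (hf : IsPolymatroid M f) {Y A : Finset α}
    (hY : Y ⊆ M) (hA : A ⊆ M) : 0 ≤ condRk f Y A :=
  sub_nonneg.2 (hf.2.2.1 A (Y ∪ A) subset_union_right (union_subset hY hA))

end IsPolymatroid

theorem ingExprCond_add_commExprCond_eq {α : Type*} [DecidableEq α] (f : Finset α → ℝ)
    (A B P Q Y E : Finset α) :
    ingExprCond f A B P Q E + commExprCond f A B Y E =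
      condMI f A B (P ∪ Y ∪ E) + condMI f A B (Q ∪ Y ∪ E) + condMI f P Q (Y ∪ E) +
      condMI f P Y (A ∪ E) + condMI f P Y (B ∪ E) + condMI f Q Y (A ∪ E) +
      condMI f Q Y (B ∪ E) +
      condRk f Y (P ∪ Q ∪ E) + condRk f Y (A ∪ B ∪ P ∪ E) + condRk f Y (A ∪ B ∪ Q ∪ E) := by
  simp only [ingExprCond, commExprCond, condMI, condRk, union_comm, union_left_comm]
  ring

/-- In any polymatroid, for arbitrary subsets `A,B,P,Q,Y,E` of
the ground set, `Ing(A,B;P,Q|E) + Comm(A,B;Y|E) ≥ 0`. -/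
theorem statement_14 {α : Type*} [DecidableEq α]
    (M : Finset α) (f : Finset α → ℝ) (hf : IsPolymatroid M f)
    (A B P Q Y E : Finset α)
    (hA : A ⊆ M) (hB : B ⊆ M) (hP : P ⊆ M) (hQ : Q ⊆ M) (hY : Y ⊆ M) (hE : E ⊆ M) :
    0 ≤ ingExprCond f A B P Q E + commExprCond f A B Y E := by
  have hAB := union_subset hA hB
  have hYE := union_subset hY hE
  rw [ingExprCond_add_commExprCond_eq]
  linarith [hf.condMI_nonneg hA hB (union_subset (union_subset hP hY) hE),
    hf.condMI_nonneg hA hB (union_subset (union_subset hQ hY) hE),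
    hf.condMI_nonneg hP hQ hYE,
    hf.condMI_nonneg hP hY (union_subset hA hE), hf.condMI_nonneg hP hY (union_subset hB hE),
    hf.condMI_nonneg hQ hY (union_subset hA hE), hf.condMI_nonneg hQ hY (union_subset hB hE),
    hf.condRk_nonneg hY (union_subset (union_subset hP hQ) hE),
    hf.condRk_nonneg hY (union_subset (union_subset hAB hP) hE),
    hf.condRk_nonneg hY (union_subset (union_subset hAB hQ) hE)]
end

section
/- Let f be any real-valued function on subsets of a finite set M. Then for arbitrary subsets A,B,P,Q,Y,E of M, the following identity of linear combinations of values of f holds: Ing(A,B;P,Q|E) + Comm(A,B;Y|E) = f(A,B|P∪Y∪E) + f(A,B|Q∪Y∪E) + f(P,Q|Y∪E) + f(P,Y|A∪E) + f(P,Y|B∪E) + f(Q,Y|A∪E) + f(Q,Y|B∪E) + f(Y|A∪B∪P∪E) + f(Y|A∪B∪Q∪E) + f(Y|P∪Q∪E). -/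
theorem statement_15_general {α : Type*} [DecidableEq α]
    (f : Finset α → ℝ)
    (A B P Q Y E : Finset α) :
    ingExprCond f A B P Q E + commExprCond f A B Y E =
      condMI f A B (P ∪ Y ∪ E) + condMI f A B (Q ∪ Y ∪ E) + condMI f P Q (Y ∪ E) +
      condMI f P Y (A ∪ E) + condMI f P Y (B ∪ E) +
      condMI f Q Y (A ∪ E) + condMI f Q Y (B ∪ E) +
      condRk f Y (A ∪ B ∪ P ∪ E) + condRk f Y (A ∪ B ∪ Q ∪ E) +
      condRk f Y (P ∪ Q ∪ E) := by
  simp only [ingExprCond, commExprCond, condMI, condRk, Finset.union_comm, Finset.union_left_comm]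
  ring

/-- For an arbitrary real-valued function `f` on subsets of a
finite set `M` and arbitrary subsets `A,B,P,Q,Y,E` of `M`, the expression
`Ing(A,B;P,Q|E) + Comm(A,B;Y|E)` equals the ten-term sum
`f(A,B|P∪Y∪E) + f(A,B|Q∪Y∪E) + f(P,Q|Y∪E) + f(P,Y|A∪E) + f(P,Y|B∪E) +
 f(Q,Y|A∪E) + f(Q,Y|B∪E) + f(Y|A∪B∪P∪E) + f(Y|A∪B∪Q∪E) + f(Y|P∪Q∪E)`. -/
theorem statement_15 {α : Type*} [DecidableEq α]
    (M : Finset α) (f : Finset α → ℝ)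
    (A B P Q Y E : Finset α)
    (hA : A ⊆ M) (hB : B ⊆ M) (hP : P ⊆ M) (hQ : Q ⊆ M) (hY : Y ⊆ M) (hE : E ⊆ M) :
    ingExprCond f A B P Q E + commExprCond f A B Y E =
      condMI f A B (P ∪ Y ∪ E) + condMI f A B (Q ∪ Y ∪ E) + condMI f P Q (Y ∪ E) +
      condMI f P Y (A ∪ E) + condMI f P Y (B ∪ E) +
      condMI f Q Y (A ∪ E) + condMI f Q Y (B ∪ E) +
      condRk f Y (A ∪ B ∪ P ∪ E) + condRk f Y (A ∪ B ∪ Q ∪ E) +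
      condRk f Y (P ∪ Q ∪ E) :=
  statement_15_general f A B P Q Y E
end
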